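/- arXiv:2501.03642 — 15 statements merged into one kernel-verified Lean document; each statement's English description precedes it below -/
import Mathlib

section
/- Let $G$ be a graph and $S \subseteq V(G)$ a set of vertices that is not a skew forcing set of $G$. Then the complement of the skew closure of $S$, i.e., $V(G) \setminus \mathrm{cl}_-(G,S)$, is a skew fort of $G$. -/
open SimpleGraph

variable {V : Type*}

/-- A skew fort: a nonempty vertex set `F` such that no vertex of the graph
has exactly one neighbor in `F`. -/
def SkewFort (G : SimpleGraph V) (F : Set V) : Prop :=
  F.Nonempty ∧ ∀ v : V, (G.neighborSet v ∩ F).ncard ≠ 1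

/-- The vertices eventually forced blue by the skew color change rule starting
from the set `S` of initially blue vertices: a vertex `v` is forced if some
vertex `u` has `v` as its unique non-blue neighbor. -/
inductive SkewForced (G : SimpleGraph V) (S : Set V) : V → Prop
  | mem : ∀ {v}, v ∈ S → SkewForced G S v
  | force : ∀ {u v}, G.Adj u v → (∀ w, G.Adj u w → w ≠ v → SkewForced G S w) →
      SkewForced G S v

/-- The skew closure of `S`: the final set of blue vertices. -/
def skewClosure (G : SimpleGraph V) (S : Set V) : Set V := {v | SkewForced G S v}

/-- `S` is a skew forcing set if its skew closure is everything. -/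
def IsSkewForcingSet (G : SimpleGraph V) (S : Set V) : Prop :=
  skewClosure G S = Set.univ

/-- The skew forcing number: minimum cardinality of a skew forcing set. -/
noncomputable def skewForcingNumber (G : SimpleGraph V) : ℕ :=
  sInf {n | ∃ S : Set V, S.ncard = n ∧ IsSkewForcingSet G S}

/-- If `S` is not a skew forcing set, then the complement of its skew closure
is a skew fort. -/
theorem skewFort_compl_skewClosure [Fintype V] (G : SimpleGraph V) (S : Set V)
    (h : ¬ IsSkewForcingSet G S) : SkewFort G (skewClosure G S)ᶜ := by
  constructor
  · rw [Set.nonempty_compl]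
    exact fun he => h he
  · intro v hcard
    obtain ⟨w, hw⟩ := Set.ncard_eq_one.mp hcard
    have hwmem : w ∈ G.neighborSet v ∩ (skewClosure G S)ᶜ := hw ▸ rfl
    have : SkewForced G S w := by
      refine SkewForced.force hwmem.1 (fun x hx hxw => ?_)
      by_contra hxn
      have : x ∈ G.neighborSet v ∩ (skewClosure G S)ᶜ := ⟨hx, hxn⟩
      rw [hw] at this
      exact hxw this
    exact hwmem.2 this
end

section
/- Let $G$ be a graph, $S \subseteq V(G)$, and $F$ a skew fort of $G$ with $S \cap F = \emptyset$. Then $\mathrm{cl}_-(G,S) \cap F = \emptyset$. -/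
open SimpleGraph

variable {V : Type*}

/-- If a skew fort is disjoint from `S`, it is disjoint from the skew closure of `S`. -/
theorem skewClosure_disjoint_fort [Fintype V] (G : SimpleGraph V) (S F : Set V)
    (hF : SkewFort G F) (hSF : S ∩ F = ∅) : skewClosure G S ∩ F = ∅ := by
  have key : ∀ v, SkewForced G S v → v ∉ F := by
    intro v hv
    induction hv with
    | mem h =>
      intro hvF
      exact absurd (Set.mem_inter h hvF) (by simp [hSF])
    | @force u v hadj hall ih =>
      intro hvF
      have hsub : G.neighborSet u ∩ F ⊆ {v} := by
        intro w ⟨hw1, hw2⟩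
        by_contra hne
        exact ih w hw1 hne hw2
      have heq : G.neighborSet u ∩ F = {v} :=
        Set.Subset.antisymm hsub (by
          rintro x rfl; exact ⟨hadj, hvF⟩)
      exact hF.2 u (by rw [heq]; simp)
  ext v
  simp only [Set.mem_inter_iff, Set.mem_empty_iff_false, iff_false, not_and]
  exact key v
end

section
/- A set $S \subseteq V(G)$ is a skew forcing set of a graph $G$ if and only if $S \cap F \neq \emptyset$ for every skew fort $F$ of $G$. -/
open SimpleGraph

variable {V : Type*}

/-- `S` is a skew forcing set iff it intersects every skew fort. -/
theorem isSkewForcingSet_iff_meets_forts [Fintype V] (G : SimpleGraph V) (S : Set V) :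
    IsSkewForcingSet G S ↔ ∀ F : Set V, SkewFort G F → (S ∩ F).Nonempty := by
  constructor
  · rintro h F ⟨⟨x, hx⟩, hF⟩
    by_contra hne
    rw [Set.not_nonempty_iff_eq_empty] at hne
    have key : ∀ v, SkewForced G S v → v ∉ F := by
      intro v hv
      induction hv with
      | mem hvS =>
        intro hvF
        have : _ ∈ S ∩ F := Set.mem_inter hvS hvF
        rw [hne] at this; exact this
      | @force u v hadj hall ih =>
        intro hvF
        apply hF u
        have heq : G.neighborSet u ∩ F = {v} := by
          ext w
          simp only [Set.mem_inter_iff, mem_neighborSet, Set.mem_singleton_iff]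
          constructor
          · rintro ⟨haw, hwF⟩
            by_contra hwv
            exact ih w haw hwv hwF
          · rintro rfl; exact ⟨hadj, hvF⟩
        rw [heq, Set.ncard_singleton]
    have hxf : SkewForced G S x := by
      rw [IsSkewForcingSet, Set.eq_univ_iff_forall] at h
      exact h x
    exact key x hxf hx
  · intro h
    rw [IsSkewForcingSet, Set.eq_univ_iff_forall]
    by_contra hc
    push_neg at hc
    obtain ⟨x, hx⟩ := hc
    set F := {v | ¬ SkewForced G S v} with hFdef
    have hfort : SkewFort G F := by
      refine ⟨⟨x, hx⟩, ?_⟩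
      intro v hcard
      rw [Set.ncard_eq_one] at hcard
      obtain ⟨w, hw⟩ := hcard
      have hwmem : w ∈ G.neighborSet v ∩ F := by rw [hw]; rfl
      have : SkewForced G S w := by
        apply SkewForced.force hwmem.1
        intro z hz hzw
        by_contra hzf
        have hz' : z ∈ G.neighborSet v ∩ F := ⟨hz, hzf⟩
        rw [hw] at hz'
        exact hzw hz'
      exact hwmem.2 this
    obtain ⟨y, hyS, hyF⟩ := h F hfort
    exact hyF (SkewForced.mem hyS)
end

section
/- For any graph $G$ and set $S \subseteq V(G)$, the complement of the skew closure of $S$ equals the union of all skew forts of $G$ that are disjoint from $S$: $V(G) \setminus \mathrm{cl}_-(G,S) = \bigcup \{F : F \text{ is a skew fort of } G, S \cap F = \emptyset\}$. -/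
open SimpleGraph

variable {V : Type*}

/-- The complement of the skew closure of `S` is the union of all skew forts
disjoint from `S`. -/
theorem compl_skewClosure_eq_sUnion_forts [Fintype V] (G : SimpleGraph V) (S : Set V) :
    (skewClosure G S)ᶜ = ⋃₀ {F : Set V | SkewFort G F ∧ S ∩ F = ∅} := by
  ext v
  simp only [Set.mem_compl_iff, Set.mem_sUnion, Set.mem_setOf_eq]
  constructor
  · intro hv
    refine ⟨(skewClosure G S)ᶜ, ⟨⟨⟨v, hv⟩, ?_⟩, ?_⟩, hv⟩
    · intro u hcard
      obtain ⟨w, hw⟩ := Set.ncard_eq_one.mp hcard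
      have hwmem : w ∈ G.neighborSet u ∩ (skewClosure G S)ᶜ := by rw [hw]; rfl
      exact hwmem.2 (SkewForced.force hwmem.1 (fun x hx hxw => by
        by_contra hxn
        have hmem : x ∈ G.neighborSet u ∩ (skewClosure G S)ᶜ := ⟨hx, hxn⟩
        rw [hw] at hmem
        exact hxw hmem))
    · ext x
      simp only [Set.mem_inter_iff, Set.mem_empty_iff_false, iff_false, not_and]
      intro hxS hxc
      exact hxc (SkewForced.mem hxS)
  · rintro ⟨F, ⟨⟨hne, hfort⟩, hdisj⟩, hvF⟩ hforced
    have key : ∀ x, SkewForced G S x → x ∉ F := by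
      intro x hx
      induction hx with
      | mem h =>
        intro hF
        exact Set.eq_empty_iff_forall_notMem.mp hdisj _ ⟨h, hF⟩
      | @force u y hadj hall ih =>
        intro hF
        apply hfort u
        apply Set.ncard_eq_one.mpr
        refine ⟨y, Set.eq_singleton_iff_unique_mem.mpr ⟨⟨hadj, hF⟩, ?_⟩⟩
        rintro z ⟨hz1, hz2⟩
        by_contra h
        exact ih z hz1 h hz2
    exact key v hforced hvF
end

section
/- Let $G$ be a bipartite graph and $X$ a vertex parameter. Then the token sliding $X$-reconfiguration graph of $G$ is bipartite. More precisely: if $H$ is a graph whose vertices are certain subsets of $V(G)$ all of the same cardinality, and whose edges join sets $S_1, S_2$ with $S_1 \setminus S_2 = \{a\}$, $S_2 \setminus S_1 = \{b\}$, $ab \in E(G)$, then $H$ contains no odd cycle. -/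
open SimpleGraph

variable {V : Type*}

/-- Token sliding reconfiguration graphs of bipartite graphs are bipartite
(contain no odd cycle). -/
theorem token_sliding_of_bipartite_no_odd_cycle [Fintype V] [DecidableEq V]
    (G : SimpleGraph V) (A B : Set V)
    (hcov : ∀ v : V, v ∈ A ∨ v ∈ B) (hdisj : ∀ v : V, ¬(v ∈ A ∧ v ∈ B))
    (hedge : ∀ u v : V, G.Adj u v → (u ∈ A ∧ v ∈ B) ∨ (u ∈ B ∧ v ∈ A))
    (𝒱 : Set (Finset V)) (k : ℕ) (hk : ∀ S ∈ 𝒱, S.card = k)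
    (H : SimpleGraph 𝒱)
    (hH : ∀ S T : 𝒱, H.Adj S T →
      ∃ a b : V, a ∈ (S : Finset V) ∧ a ∉ (T : Finset V) ∧ b ∈ (T : Finset V) ∧
        b ∉ (S : Finset V) ∧ (S : Finset V).erase a = (T : Finset V).erase b ∧ G.Adj a b) :
    ∀ (S : 𝒱) (c : H.Walk S S), c.IsCycle → Even c.length := by
  classical
  set f : 𝒱 → ZMod 2 := fun S => (((S : Finset V).filter (fun v => v ∈ A)).card : ZMod 2)
    with hf
  have key : ∀ S T : 𝒱, H.Adj S T → f T = f S + 1 := by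
    intro S T hST
    obtain ⟨a, b, haS, haT, hbT, hbS, herase, hab⟩ := hH S T hST
    have hSa : (S : Finset V) = insert a ((S : Finset V).erase a) :=
      (Finset.insert_erase haS).symm
    have hTb : (T : Finset V) = insert b ((T : Finset V).erase b) :=
      (Finset.insert_erase hbT).symm
    have haE : a ∉ (S : Finset V).erase a := Finset.notMem_erase a _
    have hbE : b ∉ (T : Finset V).erase b := Finset.notMem_erase b _
    have cardS : ((S : Finset V).filter (fun v => v ∈ A)).card
        = (((S : Finset V).erase a).filter (fun v => v ∈ A)).card
          + (if a ∈ A then 1 else 0) := by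
      conv_lhs => rw [hSa]
      rw [Finset.filter_insert]
      split
      · rw [Finset.card_insert_of_notMem (by simp [Finset.mem_filter, haE])]
      · simp
    have cardT : ((T : Finset V).filter (fun v => v ∈ A)).card
        = (((T : Finset V).erase b).filter (fun v => v ∈ A)).card
          + (if b ∈ A then 1 else 0) := by
      conv_lhs => rw [hTb]
      rw [Finset.filter_insert]
      split
      · rw [Finset.card_insert_of_notMem (by simp [Finset.mem_filter, hbE])]
      · simp
    simp only [hf]
    rw [cardS, cardT, herase]
    push_cast
    rcases hedge a b hab with ⟨ha, hb⟩ | ⟨ha, hb⟩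
    · have hbA : b ∉ A := fun h => hdisj b ⟨h, hb⟩
      simp only [if_pos ha, if_neg hbA]
      push_cast
      ring_nf
      rw [show (2 : ZMod 2) = 0 by decide, zero_add]
    · have haA : a ∉ A := fun h => hdisj a ⟨h, ha⟩
      simp only [if_neg haA, if_pos hb]
      push_cast
      ring
  have hwalk : ∀ (u v : 𝒱) (p : H.Walk u v), f v = f u + p.length := by
    intro u v p
    induction p with
    | nil => simp
    | cons h p ih =>
      rw [Walk.length_cons, ih, key _ _ h]
      push_cast
      ring
  intro S c _
  have := hwalk S S c
  have hz : (c.length : ZMod 2) = 0 := left_eq_add.mp this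
  exact even_iff_two_dvd.mpr ((ZMod.natCast_eq_zero_iff _ _).1 hz)
end

section
/- Let $U$ be a set and $W$ a family of subsets of $U$ with $|W| > 1$ such that for all distinct $P, Q \in W$, $|P \setminus Q| = |Q \setminus P| = 1$. Let $Y = \bigcap W$ and $Z = (\bigcup W) \setminus Y$. Then either $W = \{Y \cup \{z\} : z \in Z\}$ or $W = \{Y \cup (Z \setminus \{z\}) : z \in Z\}$. -/
lemma struct_aux {α : Type*} [DecidableEq α]
    (W : Finset (Finset α)) (hW : 1 < W.card)
    (h : ∀ P ∈ W, ∀ Q ∈ W, P ≠ Q → (P \ Q).card = 1 ∧ (Q \ P).card = 1)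
    (hI : ∀ x : α, ¬ ∀ P ∈ W, x ∈ P)
    (Z : Finset α) (hZ : ∀ x : α, x ∈ Z ↔ ∃ P ∈ W, x ∈ P) :
    W = Z.image (fun z => ({z} : Finset α)) ∨ W = Z.image (fun z => Z.erase z) := by
  obtain ⟨A, hA, B0, hB0, hne0⟩ := Finset.one_lt_card.mp hW
  have struct : ∀ P ∈ W, P ≠ A → ∃ x ∈ A, ∃ y, y ∉ A ∧ P = insert y (A.erase x) := by
    intro P hP hPA
    obtain ⟨h1, h2⟩ := h P hP A hA hPA
    obtain ⟨y, hy⟩ := Finset.card_eq_one.mp h1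
    obtain ⟨x, hx⟩ := Finset.card_eq_one.mp h2
    have hxm : x ∈ A \ P := hx ▸ Finset.mem_singleton_self x
    have hym : y ∈ P \ A := hy ▸ Finset.mem_singleton_self y
    have hxA : x ∈ A := (Finset.mem_sdiff.mp hxm).1
    have hxP : x ∉ P := (Finset.mem_sdiff.mp hxm).2
    have hyP : y ∈ P := (Finset.mem_sdiff.mp hym).1
    have hyA : y ∉ A := (Finset.mem_sdiff.mp hym).2
    refine ⟨x, hxA, y, hyA, ?_⟩
    ext u
    simp only [Finset.mem_insert, Finset.mem_erase]
    constructor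
    · intro hu
      by_cases huA : u ∈ A
      · right; exact ⟨fun he => hxP (he ▸ hu), huA⟩
      · left
        have : u ∈ P \ A := Finset.mem_sdiff.mpr ⟨hu, huA⟩
        rw [hy] at this; exact Finset.mem_singleton.mp this
    · rintro (rfl | ⟨hux, huA⟩)
      · exact hyP
      · by_contra huP
        have : u ∈ A \ P := Finset.mem_sdiff.mpr ⟨huA, huP⟩
        rw [hx] at this
        exact hux (Finset.mem_singleton.mp this)
  rcases lt_or_ge A.card 2 with hk | hk
  · -- all members are singletons
    have h1 := (h A hA B0 hB0 hne0).1
    have hle : 1 ≤ A.card := by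
      rw [← h1]; exact Finset.card_le_card Finset.sdiff_subset
    have hA1 : A.card = 1 := by omega
    obtain ⟨a, rfl⟩ := Finset.card_eq_one.mp hA1
    left
    have sing : ∀ P ∈ W, ∃ z, P = {z} := by
      intro P hP
      by_cases hPA : P = {a}
      · exact ⟨a, hPA⟩
      obtain ⟨x, hxA, y, hyA, hPe⟩ := struct P hP hPA
      rw [Finset.mem_singleton] at hxA; subst hxA
      rw [Finset.erase_singleton] at hPe
      exact ⟨y, by simpa using hPe⟩
    ext P
    simp only [Finset.mem_image]
    constructor
    · intro hP
      obtain ⟨z, rfl⟩ := sing P hP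
      exact ⟨z, (hZ z).mpr ⟨_, hP, Finset.mem_singleton_self z⟩, rfl⟩
    · rintro ⟨z, hzZ, rfl⟩
      obtain ⟨P, hP, hzP⟩ := (hZ z).mp hzZ
      obtain ⟨w, rfl⟩ := sing P hP
      rw [Finset.mem_singleton] at hzP; subst hzP
      exact hP
  · -- all members are co-singletons in Z
    have L2 : ∀ x₁ ∈ A, ∀ x₂ ∈ A, x₁ ≠ x₂ → ∀ y₁ y₂, y₁ ∉ A → y₂ ∉ A →
        insert y₁ (A.erase x₁) ∈ W → insert y₂ (A.erase x₂) ∈ W → y₁ = y₂ := by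
      intro x₁ hx₁ x₂ hx₂ hx12 y₁ y₂ hy₁ hy₂ hB₁ hB₂
      by_contra hne
      have hy1B2 : y₁ ∉ insert y₂ (A.erase x₂) := by
        intro hc'
        rcases Finset.mem_insert.mp hc' with h' | h'
        · exact hne h'
        · exact hy₁ (Finset.mem_of_mem_erase h')
      have hBne : insert y₁ (A.erase x₁) ≠ insert y₂ (A.erase x₂) := by
        intro he
        exact hy1B2 (he ▸ Finset.mem_insert_self _ _)
      have hc := (h _ hB₁ _ hB₂ hBne).1
      have hsub : ({y₁, x₂} : Finset α) ⊆ insert y₁ (A.erase x₁) \ insert y₂ (A.erase x₂) := by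
        intro u hu
        rcases Finset.mem_insert.mp hu with rfl | hu
        · exact Finset.mem_sdiff.mpr ⟨Finset.mem_insert_self _ _, hy1B2⟩
        · rw [Finset.mem_singleton] at hu; subst hu
          refine Finset.mem_sdiff.mpr ⟨?_, ?_⟩
          · exact Finset.mem_insert_of_mem (Finset.mem_erase.mpr ⟨Ne.symm hx12, hx₂⟩)
          · intro hc'
            rcases Finset.mem_insert.mp hc' with h' | h'
            · exact hy₂ (h' ▸ hx₂)
            · exact (Finset.mem_erase.mp h').1 rfl
      have h2le : 2 ≤ 1 := by
        calc 2 = ({y₁, x₂} : Finset α).card :=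
              (Finset.card_pair (fun he => hy₁ (by rw [he]; exact hx₂))).symm
          _ ≤ _ := Finset.card_le_card hsub
          _ = 1 := hc
      omega
    have exmiss : ∀ a ∈ A, ∃ y, y ∉ A ∧ insert y (A.erase a) ∈ W := by
      intro a ha
      have hh := hI a
      push_neg at hh
      obtain ⟨P, hP, haP⟩ := hh
      have hPA : P ≠ A := fun e => haP (e ▸ ha)
      obtain ⟨x, hxA, y, hyA, hPe⟩ := struct P hP hPA
      have hax : a = x := by
        by_contra hax
        exact haP (hPe ▸ Finset.mem_insert_of_mem (Finset.mem_erase.mpr ⟨hax, ha⟩))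
      subst hax
      exact ⟨y, hyA, by rw [← hPe]; exact hP⟩
    obtain ⟨a₁, ha₁, a₂, ha₂, ha12⟩ := Finset.one_lt_card.mp hk
    obtain ⟨y₁, hy₁A, hP₁⟩ := exmiss a₁ ha₁
    obtain ⟨y₂, hy₂A, hP₂⟩ := exmiss a₂ ha₂
    have hy12 : y₁ = y₂ := L2 a₁ ha₁ a₂ ha₂ ha12 y₁ y₂ hy₁A hy₂A hP₁ hP₂
    subst hy12
    have main : ∀ P ∈ W, P = A ∨ ∃ x ∈ A, P = insert y₁ (A.erase x) := by
      intro P hP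
      by_cases hPA : P = A
      · left; exact hPA
      right
      obtain ⟨x, hxA, w, hwA, hPe⟩ := struct P hP hPA
      have hPW : insert w (A.erase x) ∈ W := by rw [← hPe]; exact hP
      have hw : w = y₁ := by
        rcases ne_or_eq x a₁ with hxa | hxa
        · exact L2 x hxA a₁ ha₁ hxa w y₁ hwA hy₁A hPW hP₁
        · subst hxa
          exact L2 x hxA a₂ ha₂ ha12 w y₁ hwA hy₂A hPW hP₂
      subst hw
      exact ⟨x, hxA, hPe⟩
    have hZeq : Z = insert y₁ A := by
      ext z
      rw [hZ z]
      constructor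
      · rintro ⟨P, hP, hzP⟩
        rcases main P hP with rfl | ⟨x, hxA, rfl⟩
        · exact Finset.mem_insert_of_mem hzP
        · rcases Finset.mem_insert.mp hzP with rfl | hz
          · exact Finset.mem_insert_self _ _
          · exact Finset.mem_insert_of_mem (Finset.mem_of_mem_erase hz)
      · intro hz
        rcases Finset.mem_insert.mp hz with rfl | hz
        · exact ⟨_, hP₁, Finset.mem_insert_self _ _⟩
        · exact ⟨A, hA, hz⟩
    right
    ext P
    simp only [Finset.mem_image]
    constructor
    · intro hP
      rcases main P hP with rfl | ⟨x, hxA, rfl⟩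
      · refine ⟨y₁, ?_, ?_⟩
        · rw [hZeq]; exact Finset.mem_insert_self _ _
        · rw [hZeq, Finset.erase_insert hy₁A]
      · refine ⟨x, ?_, ?_⟩
        · rw [hZeq]; exact Finset.mem_insert_of_mem hxA
        · rw [hZeq, Finset.erase_insert_of_ne (fun e => hy₁A (by rw [e]; exact hxA))]
    · rintro ⟨z, hzZ, rfl⟩
      have hh := hI z
      push_neg at hh
      obtain ⟨P, hP, hzP⟩ := hh
      rcases main P hP with rfl | ⟨x, hxA, rfl⟩
      · have hzy : z = y₁ := by
          rw [hZeq] at hzZ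
          rcases Finset.mem_insert.mp hzZ with h' | h'
          · exact h'
          · exact absurd h' hzP
        subst hzy
        rw [hZeq, Finset.erase_insert hy₁A]; exact hP
      · have hzx : z = x := by
          rw [hZeq] at hzZ
          rcases Finset.mem_insert.mp hzZ with rfl | h'
          · exact absurd (Finset.mem_insert_self _ _) hzP
          · by_contra hzx
            exact hzP (Finset.mem_insert_of_mem (Finset.mem_erase.mpr ⟨hzx, h'⟩))
        subst hzx
        rw [hZeq, Finset.erase_insert_of_ne (fun e => hy₁A (by rw [e]; exact hxA))]
        exact hP

/-- If any two distinct members of a family `W` of sets differ by exactly one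
element in each direction, then, with `Y = ⋂ W` and `Z = (⋃ W) \ Y`, either
`W = {Y ∪ {z} : z ∈ Z}` or `W = {Y ∪ (Z \ {z}) : z ∈ Z}`. -/
theorem set_difference_structure {α : Type*} [DecidableEq α]
    (W : Finset (Finset α)) (hW : 1 < W.card)
    (h : ∀ P ∈ W, ∀ Q ∈ W, P ≠ Q → (P \ Q).card = 1 ∧ (Q \ P).card = 1)
    (Y Z : Finset α)
    (hY : ∀ x : α, x ∈ Y ↔ ∀ P ∈ W, x ∈ P)
    (hZ : ∀ x : α, x ∈ Z ↔ ((∃ P ∈ W, x ∈ P) ∧ x ∉ Y)) :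
    W = Z.image (fun z => insert z Y) ∨
      W = Z.image (fun z => Y ∪ (Z.erase z)) := by
  classical
  have hWne : W.Nonempty := Finset.card_pos.mp (by omega)
  have hYsub : ∀ P ∈ W, Y ⊆ P := fun P hP x hx => (hY x).1 hx P hP
  set W' := W.image (fun P => P \ Y) with hW'def
  have hinj : Set.InjOn (fun P => P \ Y) W := by
    intro P hP Q hQ he
    replace he : P \ Y = Q \ Y := he
    have hu : P \ Y ∪ Y = Q \ Y ∪ Y := by rw [he]
    rwa [Finset.sdiff_union_of_subset (hYsub P hP),
      Finset.sdiff_union_of_subset (hYsub Q hQ)] at hu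
  have hcard' : W'.card = W.card := Finset.card_image_of_injOn hinj
  have hdiff : ∀ P ∈ W, ∀ Q ∈ W, (P \ Y) \ (Q \ Y) = P \ Q := by
    intro P hP Q hQ
    ext x
    simp only [Finset.mem_sdiff]
    constructor
    · rintro ⟨⟨h1, h2⟩, h3⟩
      exact ⟨h1, fun hxQ => h3 ⟨hxQ, h2⟩⟩
    · rintro ⟨h1, h2⟩
      exact ⟨⟨h1, fun hxY => h2 (hYsub Q hQ hxY)⟩, fun hq => h2 hq.1⟩
  have h' : ∀ P' ∈ W', ∀ Q' ∈ W', P' ≠ Q' → (P' \ Q').card = 1 ∧ (Q' \ P').card = 1 := by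
    intro P' hP' Q' hQ' hne
    obtain ⟨P, hP, rfl⟩ := Finset.mem_image.mp hP'
    obtain ⟨Q, hQ, rfl⟩ := Finset.mem_image.mp hQ'
    have hPQ : P ≠ Q := fun e => hne (by rw [e])
    rw [hdiff P hP Q hQ, hdiff Q hQ P hP]
    exact h P hP Q hQ hPQ
  have hI' : ∀ x : α, ¬ ∀ P' ∈ W', x ∈ P' := by
    intro x hx
    obtain ⟨P, hP⟩ := hWne
    have hxP := hx _ (Finset.mem_image_of_mem _ hP)
    rw [Finset.mem_sdiff] at hxP
    exact hxP.2 ((hY x).2 (fun Q hQ =>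
      (Finset.mem_sdiff.mp (hx _ (Finset.mem_image_of_mem _ hQ))).1))
  have hZ' : ∀ x : α, x ∈ Z ↔ ∃ P' ∈ W', x ∈ P' := by
    intro x
    rw [hZ x]
    constructor
    · rintro ⟨⟨P, hP, hxP⟩, hxY⟩
      exact ⟨P \ Y, Finset.mem_image_of_mem _ hP, Finset.mem_sdiff.mpr ⟨hxP, hxY⟩⟩
    · rintro ⟨P', hP', hxP'⟩
      obtain ⟨P, hP, rfl⟩ := Finset.mem_image.mp hP'
      rw [Finset.mem_sdiff] at hxP'
      exact ⟨⟨P, hP, hxP'.1⟩, hxP'.2⟩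
  have hW'card : 1 < W'.card := by rw [hcard']; exact hW
  rcases struct_aux W' hW'card h' hI' Z hZ' with hcase | hcase
  · left
    ext P
    simp only [Finset.mem_image]
    constructor
    · intro hP
      have hmem : P \ Y ∈ W' := Finset.mem_image_of_mem _ hP
      rw [hcase] at hmem
      obtain ⟨z, hz, he⟩ := Finset.mem_image.mp hmem
      refine ⟨z, hz, ?_⟩
      have hu := Finset.sdiff_union_of_subset (hYsub P hP)
      rw [← hu, ← he]
      ext u; simp
    · rintro ⟨z, hz, rfl⟩
      have hmem : ({z} : Finset α) ∈ W' := by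
        rw [hcase]; exact Finset.mem_image_of_mem _ hz
      obtain ⟨P, hP, he⟩ := Finset.mem_image.mp hmem
      have hPe : P = insert z Y := by
        rw [← Finset.sdiff_union_of_subset (hYsub P hP)]
        rw [he]
        ext u; simp
      rwa [← hPe]
  · right
    ext P
    simp only [Finset.mem_image]
    constructor
    · intro hP
      have hmem : P \ Y ∈ W' := Finset.mem_image_of_mem _ hP
      rw [hcase] at hmem
      obtain ⟨z, hz, he⟩ := Finset.mem_image.mp hmem
      refine ⟨z, hz, ?_⟩
      have hu := Finset.sdiff_union_of_subset (hYsub P hP)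
      rw [← hu, ← he, Finset.union_comm]
    · rintro ⟨z, hz, rfl⟩
      have hmem : Z.erase z ∈ W' := by
        rw [hcase]; exact Finset.mem_image_of_mem _ hz
      obtain ⟨P, hP, he⟩ := Finset.mem_image.mp hmem
      have hPe : P = Y ∪ Z.erase z := by
        rw [← Finset.sdiff_union_of_subset (hYsub P hP)]
        rw [he, Finset.union_comm]
      rwa [← hPe]
end

section
/- Let $T$ be a tree and $B \subseteq V(T)$ a minimum skew forcing set. Then $T - B$ has a unique perfect matching which is a maximum matching of $T$; consequently, $Z_-(T) = |V(T)| - 2\nu(T)$, where $\nu(T)$ is the matching number of $T$. -/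
/-!
If `S` is a skew forcing set, some vertex `u` forces a vertex `v` directly from `S`. All other
neighbours of `u` lie in `S`, so a matching covering the complement of `S ∪ {v}` can be changed
to match `u` with `v` while uncovering only a vertex of `S`. By induction `V ∖ S` is covered by
a matching, so `|S| ≥ n - 2ν` in every graph.

In a forest the complement of the vertex set of any matching `M` is skew forcing: a leaf `l`
of the forest induced on `V(M)` forces its partner `q`, and once the rest of `V(M)` is blue,
`q` forces `l`. Taking `M` maximum gives `Z₋ = n - 2ν`, so the covering matching of a minimum
forcing set `B` is perfect on `V ∖ B`. It is unique: if two perfect matchings of the same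
vertex set differed, the set `D` of vertices where they differ would contain a vertex with at
most one neighbour in `D`, yet both of its partners lie in `D`.
-/

open SimpleGraph

variable {V : Type*}

/-- The matching number: maximum number of edges in a matching. -/
noncomputable def matchingNumber (G : SimpleGraph V) : ℕ :=
  sSup {n | ∃ M : G.Subgraph, M.IsMatching ∧ M.edgeSet.ncard = n}

namespace SimpleGraph.Subgraph

variable {G : SimpleGraph V} {M : G.Subgraph}

theorem isMatching_bot : (⊥ : G.Subgraph).IsMatching := fun _ hv => hv.elim

theorem IsMatching.deleteVerts (hM : M.IsMatching) {X : Set V}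
    (hX : ∀ x ∈ X, ∀ y, M.Adj x y → y ∈ X) : (M.deleteVerts X).IsMatching := by
  rintro v ⟨hv, hvX⟩
  obtain ⟨w, hvw, hw⟩ := hM hv
  have hwX : w ∉ X := fun hwX => hvX (hX w hwX v hvw.symm)
  exact ⟨w, deleteVerts_adj.mpr ⟨hv, hvX, hvw.snd_mem, hwX, hvw⟩,
    fun y hy => hw y (deleteVerts_adj.mp hy).2.2.2.2⟩

theorem IsMatching.exists_isMatching_insert (hM : M.IsMatching) {u v : V} (huv : G.Adj u v)
    (hv : v ∉ M.verts) :
    ∃ M' : G.Subgraph, M'.IsMatching ∧ insert v M.verts \ M.neighborSet u ⊆ M'.verts := by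
  set X := insert u (M.neighborSet u)
  have hX : ∀ x ∈ X, ∀ y, M.Adj x y → y ∈ X := by
    rintro x (rfl | hux) y hxy
    · exact Or.inr hxy
    · exact Or.inl (hM.eq_of_adj_left hxy hux.symm)
  have hdisj : Disjoint (M.deleteVerts X).support (G.subgraphOfAdj huv).support := by
    rw [(hM.deleteVerts hX).support_eq_verts, (IsMatching.subgraphOfAdj huv).support_eq_verts,
      deleteVerts_verts, subgraphOfAdj_verts, Set.disjoint_right]
    rintro x (rfl | rfl) hx
    exacts [hx.2 (Set.mem_insert _ _), hv hx.1]
  refine ⟨_, (hM.deleteVerts hX).sup (.subgraphOfAdj huv) hdisj, ?_⟩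
  rintro x ⟨hx, hxu⟩
  by_cases hxuv : x = u ∨ x = v
  · exact Or.inr (by simpa using hxuv)
  refine Or.inl ⟨hx.resolve_left fun h => hxuv (Or.inr h), ?_⟩
  rintro (rfl | hux)
  exacts [hxuv (Or.inl rfl), hxu hux]

theorem IsMatching.ncard_verts [Finite V] (hM : M.IsMatching) :
    M.verts.ncard = 2 * M.edgeSet.ncard := by
  classical
  have := Fintype.ofFinite V
  have hdeg : ∀ v, M.spanningCoe.degree v = if v ∈ M.verts then 1 else 0 := by
    intro v
    rw [degree_spanningCoe]
    split_ifs with hv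
    · exact (isMatching_iff_forall_degree.mp hM) v hv
    · exact degree_of_notMem_verts hv
  have hsum := M.spanningCoe.sum_degrees_eq_twice_card_edges
  simp only [hdeg, Finset.sum_boole, Nat.cast_id] at hsum
  rw [← edgeSet_spanningCoe, ← coe_edgeFinset, Set.ncard_coe_finset, ← hsum,
    ← Set.ncard_coe_finset]
  simp

end SimpleGraph.Subgraph

section MatchingNumber

variable [Finite V]

theorem bddAbove_matchingNumber_set (G : SimpleGraph V) :
    BddAbove {n | ∃ M : G.Subgraph, M.IsMatching ∧ M.edgeSet.ncard = n} := by
  refine ⟨G.edgeSet.ncard, ?_⟩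
  rintro _ ⟨M, -, rfl⟩
  exact Set.ncard_le_ncard M.edgeSet_subset (Set.toFinite _)

theorem SimpleGraph.Subgraph.IsMatching.ncard_edgeSet_le_matchingNumber {G : SimpleGraph V}
    {M : G.Subgraph} (hM : M.IsMatching) : M.edgeSet.ncard ≤ matchingNumber G :=
  le_csSup (bddAbove_matchingNumber_set G) ⟨M, hM, rfl⟩

theorem exists_isMatching_ncard_edgeSet_eq_matchingNumber (G : SimpleGraph V) :
    ∃ M : G.Subgraph, M.IsMatching ∧ M.edgeSet.ncard = matchingNumber G :=
  Nat.sSup_mem (s := {n | ∃ M : G.Subgraph, M.IsMatching ∧ M.edgeSet.ncard = n})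
    ⟨0, ⊥, Subgraph.isMatching_bot, by simp⟩ (bddAbove_matchingNumber_set G)

end MatchingNumber

namespace SkewForced

variable {G H : SimpleGraph V} {S S' : Set V} {v : V}

theorem mono (hSS' : S ⊆ S') (h : SkewForced G S v) : SkewForced G S' v := by
  induction h with
  | mem h => exact .mem (hSS' h)
  | force huv _ ih => exact .force huv ih

theorem of_le (hHG : H ≤ G) (hS' : ∀ x ∈ S', SkewForced G S x)
    (hnew : ∀ u w, G.Adj u w → ¬H.Adj u w → (∃ z, H.Adj u z) → SkewForced G S w)
    (h : SkewForced H S' v) : SkewForced G S v := by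
  induction h with
  | mem h => exact hS' _ h
  | @force u v huv _ ih =>
    refine .force (hHG huv) fun w huw hwv => ?_
    by_cases hH : H.Adj u w
    · exact ih w hH hwv
    · exact hnew u w huw hH ⟨v, huv⟩

end SkewForced

namespace IsSkewForcingSet

variable {G : SimpleGraph V} {S S' : Set V}

theorem skewForced (hS : IsSkewForcingSet G S) (v : V) : SkewForced G S v :=
  Set.eq_univ_iff_forall.mp hS v

theorem of_forall_skewForced (h : ∀ v, SkewForced G S v) : IsSkewForcingSet G S :=
  Set.eq_univ_of_forall h

theorem mono (hS : IsSkewForcingSet G S) (hSS' : S ⊆ S') : IsSkewForcingSet G S' :=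
  of_forall_skewForced fun v => (hS.skewForced v).mono hSS'

theorem exists_force (hS : IsSkewForcingSet G S) (hS_ne : S ≠ Set.univ) :
    ∃ u v, v ∉ S ∧ G.Adj u v ∧ ∀ w, G.Adj u w → w ≠ v → w ∈ S := by
  by_contra! hstuck
  refine hS_ne (Set.eq_univ_of_forall fun v => ?_)
  induction hS.skewForced v with
  | mem h => exact h
  | @force u v huv _ ih =>
    by_contra hv
    obtain ⟨w, huw, hwv, hwS⟩ := hstuck u v hv huv
    exact hwS (ih w huw hwv)

end IsSkewForcingSet

section SkewForcingSetMatching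

variable {G : SimpleGraph V} [Finite V] {S : Set V}

theorem IsSkewForcingSet.exists_isMatching_compl_subset (hS : IsSkewForcingSet G S) :
    ∃ M : G.Subgraph, M.IsMatching ∧ Sᶜ ⊆ M.verts := by
  induction h : Sᶜ.ncard using Nat.strong_induction_on generalizing S with
  | _ n ih =>
  by_cases hS_univ : S = Set.univ
  · exact ⟨⊥, Subgraph.isMatching_bot, by simp [hS_univ]⟩
  obtain ⟨u, v, hvS, huv, hu⟩ := hS.exists_force hS_univ
  have hlt : (insert v S)ᶜ.ncard < n :=
    h ▸ Set.ncard_lt_ncard (compl_lt_compl_iff_lt.mpr (Set.ssubset_insert hvS)) (Set.toFinite _)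
  obtain ⟨M, hM, hcov⟩ := ih _ hlt (hS.mono (Set.subset_insert v S)) rfl
  have hcov' : Sᶜ ⊆ insert v M.verts := fun x hx => by
    by_cases hxv : x = v
    · exact Or.inl hxv
    · exact Or.inr (hcov fun hx' => hx' |>.elim hxv hx)
  by_cases hvM : v ∈ M.verts
  · exact ⟨M, hM, hcov'.trans (Set.insert_subset hvM le_rfl)⟩
  obtain ⟨M', hM', hcovM'⟩ := hM.exists_isMatching_insert huv hvM
  refine ⟨M', hM', fun x hx => hcovM' ⟨hcov' hx, fun hux => ?_⟩⟩
  have hxv : x ≠ v := by rintro rfl; exact hvM hux.snd_mem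
  exact hx (hu x (M.adj_sub hux) hxv)

theorem IsSkewForcingSet.ncard_compl_le (hS : IsSkewForcingSet G S) :
    Sᶜ.ncard ≤ 2 * matchingNumber G := by
  obtain ⟨M, hM, hcov⟩ := hS.exists_isMatching_compl_subset
  calc Sᶜ.ncard ≤ M.verts.ncard := Set.ncard_le_ncard hcov (Set.toFinite _)
    _ = 2 * M.edgeSet.ncard := hM.ncard_verts
    _ ≤ 2 * matchingNumber G := Nat.mul_le_mul_left 2 hM.ncard_edgeSet_le_matchingNumber

end SkewForcingSetMatching



namespace SimpleGraph

variable {G : SimpleGraph V}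

theorem spanningCoe_induce_adj {s : Set V} {x y : V} :
    (G.induce s).spanningCoe.Adj x y ↔ G.Adj x y ∧ x ∈ s ∧ y ∈ s := by
  simp

theorem spanningCoe_induce_mono {s t : Set V} (hst : s ⊆ t) :
    (G.induce s).spanningCoe ≤ (G.induce t).spanningCoe := fun _ _ hxy => by
  rw [spanningCoe_induce_adj] at hxy ⊢
  exact ⟨hxy.1, hst hxy.2.1, hst hxy.2.2⟩

namespace IsAcyclic

variable [Finite V]

theorem exists_subsingleton_neighborSet_inter (hG : G.IsAcyclic) {s : Set V}
    (hs : s.Nonempty) : ∃ l ∈ s, (G.neighborSet l ∩ s).Subsingleton := by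
  classical
  obtain ⟨r, hr⟩ := hs
  obtain ⟨l, ⟨hls, hrl⟩, hfar⟩ := Set.exists_max_image {x ∈ s | G.Reachable r x} (G.dist r)
    (Set.toFinite _) ⟨r, hr, .rfl⟩
  obtain ⟨p, hp, -⟩ := hrl.exists_path_of_dist
  -- `l` is a farthest vertex of `s` from `r`, so its neighbours in `s` lie on the path `r → l`.
  suffices ∀ x ∈ G.neighborSet l ∩ s, x = p.penultimate from
    ⟨l, hls, fun x hx y hy => (this x hx).trans (this y hy).symm⟩
  rintro x ⟨hlx, hxs⟩
  have hrx : G.Reachable r x := hrl.trans hlx.reachable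
  have hcloser : G.dist r x < G.dist r l := by
    have := hfar x ⟨hxs, hrx⟩
    rcases hG.dist_eq_dist_add_one_of_adj_of_reachable r hlx hrl with h | h <;> omega
  obtain ⟨q, hq, hqlen⟩ := hrx.exists_path_of_dist
  have hlq : l ∉ q.support := fun hl => by
    have := dist_le (q.takeUntil l hl)
    have := q.length_takeUntil_le_length hl
    omega
  exact hG.eq_penultimate_of_adj_end hp hlx
    (hG.mem_support_of_ne_mem_support_of_adj_of_isPath hp hq hlx hlq)

theorem eq_of_isMatching_of_verts_eq (hG : G.IsAcyclic) {M M' : G.Subgraph} (hM : M.IsMatching)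
    (hM' : M'.IsMatching) (hverts : M.verts = M'.verts) : M = M' := by
  suffices hle : ∀ x y, M.Adj x y → M'.Adj x y by
    refine Subgraph.ext hverts (funext₂ fun x y => propext ⟨hle x y, fun hxy => ?_⟩)
    obtain ⟨z, hxz, -⟩ := hM (hverts ▸ hxy.fst_mem)
    rwa [hM'.eq_of_adj_left hxy (hle x z hxz)]
  by_contra! hD
  obtain ⟨x₀, y₀, hD₀⟩ := hD
  obtain ⟨l, ⟨a, hla, hla'⟩, hleaf⟩ :=
    hG.exists_subsingleton_neighborSet_inter (s := {x | ∃ y, M.Adj x y ∧ ¬M'.Adj x y})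
      ⟨x₀, y₀, hD₀⟩
  obtain ⟨b, hlb, -⟩ := hM' (hverts ▸ hla.fst_mem)
  have haD : ∃ y, M.Adj a y ∧ ¬M'.Adj a y := ⟨l, hla.symm, fun h => hla' h.symm⟩
  have hbD : ∃ y, M.Adj b y ∧ ¬M'.Adj b y := by
    obtain ⟨c, hbc, -⟩ := hM (hverts.symm ▸ hlb.snd_mem)
    refine ⟨c, hbc, fun hbc' => hla' ?_⟩
    obtain rfl : c = l := hM'.eq_of_adj_left hbc' hlb.symm
    rwa [hM.eq_of_adj_left hla hbc.symm]
  have hab : a = b := hleaf ⟨M.adj_sub hla, haD⟩ ⟨M'.adj_sub hlb, hbD⟩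
  exact hla' (hab ▸ hlb)

theorem skewForced_spanningCoe_induce_verts (hG : G.IsAcyclic) {M : G.Subgraph}
    (hM : M.IsMatching) {v : V} (hv : v ∈ M.verts) : SkewForced (G.induce M.verts).spanningCoe ∅ v := by
  induction h : M.verts.ncard using Nat.strong_induction_on generalizing M v with
  | _ n ih =>
  obtain ⟨l, hl, hleaf⟩ := hG.exists_subsingleton_neighborSet_inter ⟨v, hv⟩
  obtain ⟨q, hlq, -⟩ := hM hl
  have hq_mem : q ∈ M.verts := hlq.snd_mem
  have honly : ∀ w, (G.induce M.verts).spanningCoe.Adj l w → w = q := fun w hw => by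
    rw [spanningCoe_induce_adj] at hw
    exact hleaf ⟨hw.1, hw.2.2⟩ ⟨M.adj_sub hlq, hq_mem⟩
  have hq : SkewForced (G.induce M.verts).spanningCoe ∅ q :=
    .force (spanningCoe_induce_adj.mpr ⟨M.adj_sub hlq, hl, hq_mem⟩)
      fun w hw hwq => (hwq (honly w hw)).elim
  set M' := M.deleteVerts {l, q}
  have hM' : M'.IsMatching := hM.deleteVerts <| by
    rintro x (rfl | rfl) y hxy
    · exact Or.inr (hM.eq_of_adj_left hxy hlq)
    · exact Or.inl (hM.eq_of_adj_left hxy hlq.symm)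
  have hlt : M'.verts.ncard < n := h ▸ Set.ncard_lt_ncard
    ⟨Set.sdiff_subset, fun hsub => (hsub hl).2 (Set.mem_insert l _)⟩ (Set.toFinite _)
  have hrest : ∀ w ∈ M'.verts, SkewForced (G.induce M.verts).spanningCoe ∅ w := by
    intro w hw
    refine (ih _ hlt hM' hw rfl).of_le (spanningCoe_induce_mono Set.sdiff_subset) (by simp) ?_
    rintro u x hux hux' ⟨z, huz⟩
    rw [spanningCoe_induce_adj] at hux hux' huz
    have hx : x = l ∨ x = q := by
      by_contra! hx
      exact hux' ⟨hux.1, huz.2.1, hux.2.2, by simp [hx.1, hx.2]⟩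
    rcases hx with rfl | rfl
    · have := honly u (spanningCoe_induce_adj.mpr ⟨hux.1.symm, hux.2.2, hux.2.1⟩)
      exact absurd (this ▸ huz.2.1).2 (by simp)
    · exact hq
  by_cases hvlq : v = l ∨ v = q
  · rcases hvlq with rfl | rfl
    · refine .force (spanningCoe_induce_adj.mpr ⟨(M.adj_sub hlq).symm, hq_mem, hl⟩)
        fun w hqw hwl => hrest w ?_
      rw [spanningCoe_induce_adj] at hqw
      exact ⟨hqw.2.2, by simp [hwl, hqw.1.ne.symm]⟩
    · exact hq
  · exact hrest v ⟨hv, by simpa using hvlq⟩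

theorem isSkewForcingSet_compl_verts (hG : G.IsAcyclic) {M : G.Subgraph} (hM : M.IsMatching) :
    IsSkewForcingSet G M.vertsᶜ := by
  refine IsSkewForcingSet.of_forall_skewForced fun v => ?_
  by_cases hv : v ∈ M.verts
  · refine (hG.skewForced_spanningCoe_induce_verts hM hv).of_le (spanningCoe_induce_le _ _)
      (by simp) fun u w huw huw' ⟨z, huz⟩ => .mem fun hw => huw' ?_
    rw [spanningCoe_induce_adj] at huz ⊢
    exact ⟨huw, huz.2.1, hw⟩
  · exact .mem hv

theorem skewForcingNumber_add_two_mul_matchingNumber (hG : G.IsAcyclic) :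
    skewForcingNumber G + 2 * matchingNumber G = Nat.card V := by
  obtain ⟨M, hM, hM_max⟩ := exists_isMatching_ncard_edgeSet_eq_matchingNumber G
  have hforcing := hG.isSkewForcingSet_compl_verts hM
  have hM_compl : M.vertsᶜ.ncard + 2 * matchingNumber G = Nat.card V := by
    rw [← hM_max, ← hM.ncard_verts, add_comm, Set.ncard_add_ncard_compl]
  have hle : skewForcingNumber G ≤ M.vertsᶜ.ncard := Nat.sInf_le ⟨_, rfl, hforcing⟩
  obtain ⟨S, hS_card, hS⟩ : ∃ S : Set V, S.ncard = skewForcingNumber G ∧ IsSkewForcingSet G S :=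
    Nat.sInf_mem (s := {n | ∃ S : Set V, S.ncard = n ∧ IsSkewForcingSet G S})
      ⟨_, _, rfl, hforcing⟩
  have := hS.ncard_compl_le
  have := Set.ncard_add_ncard_compl S
  omega

end IsAcyclic

end SimpleGraph

/-- If `B` is a minimum skew forcing set of a tree `T`, then `T - B` has a unique
perfect matching, which is a maximum matching of `T`; consequently
`Z₋(T) = |V(T)| - 2ν(T)`. -/
theorem tree_min_skew_forcing_matching [Fintype V] (T : SimpleGraph V) (hT : T.IsTree)
    (B : Set V) (hB : IsSkewForcingSet T B) (hmin : B.ncard = skewForcingNumber T) :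
    (∃! M : T.Subgraph, M.verts = Bᶜ ∧ M.IsMatching) ∧
    (∀ M : T.Subgraph, M.verts = Bᶜ → M.IsMatching → M.edgeSet.ncard = matchingNumber T) ∧
    skewForcingNumber T = Fintype.card V - 2 * matchingNumber T := by
  have hZ := hT.isAcyclic.skewForcingNumber_add_two_mul_matchingNumber
  have hB_compl : Bᶜ.ncard = 2 * matchingNumber T := by
    have := Set.ncard_add_ncard_compl B
    omega
  obtain ⟨M, hM, hcov⟩ := hB.exists_isMatching_compl_subset
  have hMB : M.verts = Bᶜ := by
    refine (Set.eq_of_subset_of_ncard_le hcov ?_ (Set.toFinite _)).symm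
    rw [hM.ncard_verts, hB_compl]
    exact Nat.mul_le_mul_left 2 hM.ncard_edgeSet_le_matchingNumber
  refine ⟨⟨M, ⟨hMB, hM⟩, fun M' ⟨hM'B, hM'⟩ => ?_⟩, fun M' hM'B hM' => ?_, ?_⟩
  · exact hT.isAcyclic.eq_of_isMatching_of_verts_eq hM' hM (hM'B.trans hMB.symm)
  · have := hM'.ncard_verts
    rw [hM'B, hB_compl] at this
    omega
  · rw [← Nat.card_eq_fintype_card]
    omega
end

section
/- Let $F$ be a forest with a bipartition $\{A, B\}$ of $V(F)$ such that every vertex $b \in B$ has degree at least 2. Then the matching number of $F$ equals $|B|$. -/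
/-!
Every edge has exactly one endpoint in `B`, so `B` is a vertex cover and no matching has more
than `|B|` edges. Conversely, root every component of the forest. A vertex has at most one
neighbour closer to the root (two would close a cycle), so each `b ∈ B`, having degree at least
two, has a child `f b`. The map `f` is injective because `b` is the unique parent of `f b`, and
as the children lie outside `B`, the edges `b f(b)` form a matching of size `|B|`.
-/

open SimpleGraph

variable {V : Type*}

namespace SimpleGraph

variable {G : SimpleGraph V}

theorem matchingNumber_eq_of_forall_ncard_le {n : ℕ}
    (hex : ∃ M : G.Subgraph, M.IsMatching ∧ M.edgeSet.ncard = n)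
    (hle : ∀ M : G.Subgraph, M.IsMatching → M.edgeSet.ncard ≤ n) :
    matchingNumber G = n :=
  IsGreatest.csSup_eq ⟨hex, by rintro _ ⟨M, hM, rfl⟩; exact hle M hM⟩

theorem Subgraph.IsMatching.ncard_edgeSet_le_of_isVertexCover {M : G.Subgraph}
    (hM : M.IsMatching) {B : Set V} (hB : B.Finite) (hcover : G.IsVertexCover B) :
    M.edgeSet.ncard ≤ B.ncard := by
  classical
  let edgeAt : V → Sym2 V := fun v =>
    if hv : v ∈ M.verts then hM.toEdge ⟨v, hv⟩ else s(v, v)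
  have hedgeAt : ∀ u w, M.Adj u w → u ∈ B → s(u, w) ∈ edgeAt '' B := fun u w huw hu =>
    ⟨u, hu, by simp [edgeAt, huw.fst_mem, hM.toEdge_eq_of_adj huw]⟩
  have hsub : M.edgeSet ⊆ edgeAt '' B := by
    intro e he
    induction e using Sym2.ind with
    | h x y =>
      rcases hcover (M.adj_sub he) with hx | hy
      · exact hedgeAt x y he hx
      · exact Sym2.eq_swap (a := y) ▸ hedgeAt y x he.symm hy
  calc M.edgeSet.ncard ≤ (edgeAt '' B).ncard := Set.ncard_le_ncard hsub (hB.image _)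
    _ ≤ B.ncard := Set.ncard_image_le hB

theorem exists_isMatching_ncard_edgeSet_eq {B : Set V} {f : V → V}
    (hadj : ∀ b ∈ B, G.Adj b (f b)) (hout : ∀ b ∈ B, f b ∉ B) (hinj : B.InjOn f) :
    ∃ M : G.Subgraph, M.IsMatching ∧ M.edgeSet.ncard = B.ncard := by
  let M := ⨆ b : B, G.subgraphOfAdj (hadj b b.2)
  have hdisj : Pairwise fun b b' : B =>
      Disjoint (G.subgraphOfAdj (hadj b b.2)).support (G.subgraphOfAdj (hadj b' b'.2)).support := by
    rintro ⟨b, hb⟩ ⟨b', hb'⟩ hne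
    simp only [support_subgraphOfAdj, Set.disjoint_insert_left, Set.disjoint_insert_right,
      Set.mem_insert_iff, Set.mem_singleton_iff, Set.disjoint_singleton]
    refine ⟨?_, ?_, ?_⟩ <;> grind [Set.InjOn]
  have hedges : M.edgeSet = (fun b => s(b, f b)) '' B := by
    simp [M, Set.iUnion_singleton_eq_range, Set.image_eq_range]
  refine ⟨M, Subgraph.IsMatching.iSup (fun b => .subgraphOfAdj _) hdisj, ?_⟩
  rw [hedges]
  refine Set.InjOn.ncard_image fun b hb b' hb' he => ?_
  rcases Sym2.eq_iff.mp he with ⟨h, -⟩ | ⟨h, -⟩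
  · exact h
  · exact absurd (h ▸ hb) (hout b' hb')

namespace IsAcyclic

/-- The neighbour of `b` closer to `r` is the penultimate vertex of the unique `r`–`b` path. -/
theorem eq_of_adj_of_dist_eq_add_one (hG : G.IsAcyclic) {r u u' b : V}
    (hu : G.Adj u b) (hu' : G.Adj u' b)
    (h : G.dist r b = G.dist r u + 1) (h' : G.dist r b = G.dist r u' + 1) : u = u' := by
  have hrb : G.Reachable r b := Reachable.of_dist_ne_zero (by omega)
  obtain ⟨p, hp⟩ := (hrb.trans hu.symm.reachable).exists_walk_length_eq_dist
  obtain ⟨p', hp'⟩ := (hrb.trans hu'.symm.reachable).exists_walk_length_eq_dist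
  have hpath : (p.concat hu).IsPath := (p.concat hu).isPath_of_length_eq_dist (by simp [hp, h])
  have hpath' : (p'.concat hu').IsPath :=
    (p'.concat hu').isPath_of_length_eq_dist (by simp [hp', h'])
  have heq := (hG.subsingleton_path r b).elim ⟨_, hpath⟩ ⟨_, hpath'⟩
  exact (Walk.concat_inj (Subtype.mk.inj heq)).1

theorem exists_adj_dist_eq_add_one (hG : G.IsAcyclic) {r b : V} (hrb : G.Reachable r b)
    (hdeg : 2 ≤ (G.neighborSet b).ncard) :
    ∃ c, G.Adj b c ∧ G.dist r c = G.dist r b + 1 := by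
  obtain ⟨⟨u, hu, u', hu', hne⟩, -⟩ := Set.one_lt_ncard_iff_nontrivial_and_finite.mp hdeg
  rcases hG.dist_eq_dist_add_one_of_adj_of_reachable r hu hrb with h | h
  · rcases hG.dist_eq_dist_add_one_of_adj_of_reachable r hu' hrb with h' | h'
    · exact absurd (hG.eq_of_adj_of_dist_eq_add_one hu.symm hu'.symm h h') hne
    · exact ⟨u', hu', h'⟩
  · exact ⟨u, hu, h⟩

theorem exists_injOn_adj_of_two_le_ncard_neighborSet (hG : G.IsAcyclic) {B : Set V}
    (hdeg : ∀ b ∈ B, 2 ≤ (G.neighborSet b).ncard) :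
    ∃ f : V → V, (∀ b ∈ B, G.Adj b (f b)) ∧ B.InjOn f := by
  let root : V → V := fun v => (G.connectedComponentMk v).out
  have hroot : ∀ v, G.Reachable (root v) v := fun v =>
    ConnectedComponent.exact (G.connectedComponentMk v).out_eq
  have hroot_adj : ∀ {u v}, G.Adj u v → root u = root v := fun huv => by
    simp [root, ConnectedComponent.connectedComponentMk_eq_of_adj huv]
  choose! f hfadj hfdist using fun b (hb : b ∈ B) =>
    hG.exists_adj_dist_eq_add_one (hroot b) (hdeg b hb)
  refine ⟨f, hfadj, fun b hb b' hb' hbb' => ?_⟩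
  have hr : root b' = root b := by
    rw [hroot_adj (hfadj b' hb'), ← hbb', ← hroot_adj (hfadj b hb)]
  refine hG.eq_of_adj_of_dist_eq_add_one (hfadj b hb) (hbb' ▸ hfadj b' hb') (hfdist b hb) ?_
  rw [hbb', ← hr]
  exact hfdist b' hb'

end IsAcyclic

end SimpleGraph

theorem forest_matchingNumber_eq_general [Fintype V] (F : SimpleGraph V) (hF : F.IsAcyclic)
    (A B : Set V)
    (hdisj : ∀ v : V, ¬(v ∈ A ∧ v ∈ B))
    (hedge : ∀ u v : V, F.Adj u v → (u ∈ A ∧ v ∈ B) ∨ (u ∈ B ∧ v ∈ A))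
    (hdeg : ∀ b ∈ B, 2 ≤ (F.neighborSet b).ncard) :
    matchingNumber F = B.ncard := by
  have hcover : F.IsVertexCover B := fun u v huv =>
    (hedge u v huv).elim (fun h => .inr h.2) (fun h => .inl h.1)
  have hout : ∀ u v, F.Adj u v → u ∈ B → v ∉ B := fun u v huv hu hv => by
    rcases hedge u v huv with ⟨hu', -⟩ | ⟨-, hv'⟩
    exacts [hdisj u ⟨hu', hu⟩, hdisj v ⟨hv', hv⟩]
  obtain ⟨f, hfadj, hfinj⟩ := hF.exists_injOn_adj_of_two_le_ncard_neighborSet hdeg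
  exact matchingNumber_eq_of_forall_ncard_le
    (exists_isMatching_ncard_edgeSet_eq hfadj (fun b hb => hout b (f b) (hfadj b hb) hb) hfinj)
    (fun M hM => hM.ncard_edgeSet_le_of_isVertexCover B.toFinite hcover)

/-- In a forest with a bipartition `{A, B}` where every vertex of `B` has degree
at least two, the matching number equals `|B|`. -/
theorem forest_matchingNumber_eq [Fintype V] (F : SimpleGraph V) (hF : F.IsAcyclic)
    (A B : Set V)
    (hcov : ∀ v : V, v ∈ A ∨ v ∈ B) (hdisj : ∀ v : V, ¬(v ∈ A ∧ v ∈ B))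
    (hedge : ∀ u v : V, F.Adj u v → (u ∈ A ∧ v ∈ B) ∨ (u ∈ B ∧ v ∈ A))
    (hdeg : ∀ b ∈ B, 2 ≤ (F.neighborSet b).ncard) :
    matchingNumber F = B.ncard :=
  forest_matchingNumber_eq_general F hF A B hdisj hedge hdeg
end

section
/- If $u$ is a leaf of a graph $G$ with neighbor $v$, then $Z_-(G - \{u, v\}) = Z_-(G)$. -/
/-!
The leaf `u` forces its neighbor `v` whatever the coloring, and `u` itself turns blue exactly
when all other neighbors of `v` are blue. So from a set avoiding `u` and `v`, the vertices of
`G - {u, v}` forced in `G` are those forced in `G - {u, v}`, and the forcing sets of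
`G - {u, v}` are exactly the forcing sets of `G` avoiding `u` and `v`.
Moreover, a forcing set `B` of `G` meeting `{u, v}` may replace `u` and `v` by at most one
vertex: `B \ {u, v}` fails to force at most one neighbor `z ≠ u` of `v`, for with two such
neighbors `v` could never force, and coloring `u` blue would gain nothing. Adding `z` gives a
forcing set of `G` avoiding `u` and `v`.
-/

open SimpleGraph

variable {V : Type*}

section Closure

variable {G : SimpleGraph V} {S R T : Set V}

def IsSkewClosed (G : SimpleGraph V) (T : Set V) : Prop :=
  ∀ ⦃w x⦄, G.Adj w x → (∀ y, G.Adj w y → y ≠ x → y ∈ T) → x ∈ T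

lemma isSkewClosed_skewClosure : IsSkewClosed G (skewClosure G S) :=
  fun _ _ hwx hrest => .force hwx hrest

lemma subset_skewClosure : S ⊆ skewClosure G S := fun _ => .mem

lemma skewClosure_subset (hT : IsSkewClosed G T) (hST : S ⊆ T) : skewClosure G S ⊆ T := by
  intro x hx
  induction hx with
  | mem hx => exact hST hx
  | force hwx _ ih => exact hT hwx ih

lemma skewClosure_subset_skewClosure (h : S ⊆ skewClosure G R) :
    skewClosure G S ⊆ skewClosure G R :=
  skewClosure_subset isSkewClosed_skewClosure h

lemma IsSkewForcingSet.of_subset_skewClosure (hR : IsSkewForcingSet G R)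
    (h : R ⊆ skewClosure G S) : IsSkewForcingSet G S :=
  Set.eq_univ_of_univ_subset (hR ▸ skewClosure_subset_skewClosure h)

lemma IsSkewForcingSet.skewForced_s11 (hS : IsSkewForcingSet G S) (x : V) : SkewForced G S x :=
  show x ∈ skewClosure G S from hS ▸ Set.mem_univ x

lemma isSkewForcingSet_univ : IsSkewForcingSet G Set.univ :=
  Set.eq_univ_of_univ_subset subset_skewClosure

lemma skewForcingNumber_le (hS : IsSkewForcingSet G S) : skewForcingNumber G ≤ S.ncard :=
  Nat.sInf_le ⟨S, rfl, hS⟩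

lemma exists_isSkewForcingSet_ncard_eq (G : SimpleGraph V) :
    ∃ S, IsSkewForcingSet G S ∧ S.ncard = skewForcingNumber G := by
  have hne : {n | ∃ S : Set V, S.ncard = n ∧ IsSkewForcingSet G S}.Nonempty :=
    ⟨_, Set.univ, rfl, isSkewForcingSet_univ⟩
  obtain ⟨S, hcard, hS⟩ := Nat.sInf_mem hne
  exact ⟨S, hS, hcard⟩

end Closure

section Leaf

variable {G : SimpleGraph V} {u v : V}

lemma adj_iff_of_neighborSet_eq (huv : G.neighborSet u = {v}) {w : V} : G.Adj u w ↔ w = v := by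
  rw [← mem_neighborSet, huv, Set.mem_singleton_iff]

lemma leafNeighbor_mem_skewClosure (huv : G.neighborSet u = {v}) (S : Set V) :
    v ∈ skewClosure G S :=
  .force ((adj_iff_of_neighborSet_eq huv).2 rfl)
    fun _ hw hwv => absurd ((adj_iff_of_neighborSet_eq huv).1 hw) hwv

lemma leaf_mem_skewClosure (huv : G.neighborSet u = {v}) {S : Set V}
    (h : ∀ y, G.Adj v y → y ≠ u → y ∈ skewClosure G S) : u ∈ skewClosure G S :=
  .force ((adj_iff_of_neighborSet_eq huv).2 rfl).symm h

lemma IsSkewClosed.insert_leaf (huv : G.neighborSet u = {v}) {T : Set V}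
    (hT : IsSkewClosed G T) {y₁ y₂ : V} (hy : y₁ ≠ y₂)
    (hy₁ : G.Adj v y₁ ∧ y₁ ∉ insert u T) (hy₂ : G.Adj v y₂ ∧ y₂ ∉ insert u T) :
    IsSkewClosed G (insert u T) := by
  intro w x hwx hrest
  by_cases hwv : w = v
  · subst w
    have hx₁ : y₁ = x := by_contra fun h => hy₁.2 (hrest y₁ hy₁.1 h)
    have hx₂ : y₂ = x := by_contra fun h => hy₂.2 (hrest y₂ hy₂.1 h)
    exact absurd (hx₁.trans hx₂.symm) hy
  · refine Set.mem_insert_of_mem _ (hT hwx fun y hwy hyx => ?_)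
    have hyu : y ≠ u := by
      rintro rfl
      exact hwv ((adj_iff_of_neighborSet_eq huv).1 hwy.symm)
    exact (hrest y hwy hyx).resolve_left hyu

lemma exists_isSkewForcingSet_subset_compl (huv : G.neighborSet u = {v}) {B : Set V}
    (hB : IsSkewForcingSet G B) (hfin : B.Finite) :
    ∃ B₂ ⊆ ({u, v}ᶜ : Set V), B₂.ncard ≤ B.ncard ∧ IsSkewForcingSet G B₂ := by
  by_cases hBV : B ⊆ {u, v}ᶜ
  · exact ⟨B, hBV, le_rfl, hB⟩
  set B₀ := B \ {u, v}
  set C := skewClosure G B₀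
  set W := {y | G.Adj v y ∧ y ≠ u ∧ y ∉ C}
  have hBC : B ⊆ insert u C := by
    rintro x hx
    by_cases hxuv : x ∈ ({u, v} : Set V)
    · rcases hxuv with rfl | rfl
      · exact Set.mem_insert _ _
      · exact Set.mem_insert_of_mem _ (leafNeighbor_mem_skewClosure huv _)
    · exact Set.mem_insert_of_mem _ (subset_skewClosure ⟨hx, hxuv⟩)
  have hW : W.Subsingleton := by
    intro y₁ hy₁ y₂ hy₂
    by_contra hne
    have hclosed := (isSkewClosed_skewClosure (S := B₀)).insert_leaf huv hne
      ⟨hy₁.1, (·.elim hy₁.2.1 hy₁.2.2)⟩ ⟨hy₂.1, (·.elim hy₂.2.1 hy₂.2.2)⟩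
    have hall : IsSkewForcingSet G (insert u C) :=
      hB.of_subset_skewClosure (hBC.trans subset_skewClosure)
    have : y₁ ∈ insert u C := skewClosure_subset hclosed le_rfl (hall.skewForced_s11 y₁)
    exact this.elim hy₁.2.1 hy₁.2.2
  refine ⟨B₀ ∪ W, ?_, ?_, ?_⟩
  · rintro y (hy | ⟨hvy, hyu, -⟩)
    · exact hy.2
    · simp [hyu, hvy.ne']
  · have hB₀B : B₀ ⊂ B :=
      Set.sdiff_subset.ssubset_of_ne fun h => hBV (h ▸ Set.sdiff_subset_compl _ _)
    have hB₀ : B₀.ncard < B.ncard := Set.ncard_lt_ncard hB₀B hfin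
    have hW₁ : W.ncard ≤ 1 := (Set.ncard_le_one hW.finite).2 hW
    have := Set.ncard_union_le B₀ W
    omega
  · have hC : C ⊆ skewClosure G (B₀ ∪ W) :=
      skewClosure_subset_skewClosure (Set.subset_union_left.trans subset_skewClosure)
    refine hB.of_subset_skewClosure (hBC.trans (Set.insert_subset ?_ hC))
    refine leaf_mem_skewClosure huv fun y hvy hyu => ?_
    by_cases hyC : y ∈ C
    · exact hC hyC
    · exact subset_skewClosure (Set.mem_union_right _ ⟨hvy, hyu, hyC⟩)

end Leaf

lemma mem_compl_pair_iff {a b x : V} : x ∈ ({a, b}ᶜ : Set V) ↔ x ≠ a ∧ x ≠ b := by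
  simp [not_or]

section Induce

variable {G : SimpleGraph V} {u v : V} {S : Set ({u, v}ᶜ : Set V)}

lemma skewForced_of_skewForced_induce (huv : G.neighborSet u = {v}) {x : ({u, v}ᶜ : Set V)}
    (hx : SkewForced (G.induce ({u, v}ᶜ : Set V)) S x) : SkewForced G (Subtype.val '' S) x := by
  induction hx with
  | mem hx => exact .mem ⟨_, hx, rfl⟩
  | @force w x hwx _ ih =>
    refine .force hwx fun y hwy hyx => ?_
    by_cases hyv : y = v
    · rw [hyv]
      exact leafNeighbor_mem_skewClosure huv _
    have hyu : y ≠ u := by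
      intro hyu
      rw [hyu] at hwy
      exact (mem_compl_pair_iff.1 w.2).2 ((adj_iff_of_neighborSet_eq huv).1 hwy.symm)
    exact ih ⟨y, mem_compl_pair_iff.2 ⟨hyu, hyv⟩⟩ hwy (fun h => hyx (congrArg Subtype.val h))

lemma skewForced_induce_of_skewForced (huv : G.neighborSet u = {v}) {x : V}
    (hx : SkewForced G (Subtype.val '' S) x) (hxV : x ∈ ({u, v}ᶜ : Set V)) :
    SkewForced (G.induce ({u, v}ᶜ : Set V)) S ⟨x, hxV⟩ := by
  let P : V → Prop := fun y => ∀ hy : y ∈ ({u, v}ᶜ : Set V),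
    SkewForced (G.induce ({u, v}ᶜ : Set V)) S ⟨y, hy⟩
  have hleaf : ∀ {w}, G.Adj u w ↔ w = v := adj_iff_of_neighborSet_eq huv
  have hPu : P u := fun h => absurd rfl (mem_compl_pair_iff.1 h).1
  have hPv : P v := fun h => absurd rfl (mem_compl_pair_iff.1 h).2
  -- `u` only turns blue once every other neighbor of `v` is blue in the induced graph
  suffices P x ∧ (x = u → ∀ y, G.Adj v y → P y) from this.1 hxV
  clear hxV
  induction hx with
  | mem hx =>
    obtain ⟨x', hx', rfl⟩ := hx
    refine ⟨fun _ => .mem hx', fun hxu => absurd hxu (mem_compl_pair_iff.1 x'.2).1⟩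
  | @force w x hwx _ ih =>
    by_cases hwu : w = u
    · subst w
      obtain rfl := hleaf.1 hwx
      exact ⟨hPv, fun h => absurd h (G.ne_of_adj hwx).symm⟩
    by_cases hwv : w = v
    · subst w
      by_cases hxu : x = u
      · subst x
        refine ⟨hPu, fun _ y hwy => ?_⟩
        by_cases hyu : y = u
        · exact hyu ▸ hPu
        · exact (ih y hwy hyu).1
      · have hall := (ih u (hleaf.2 rfl).symm (Ne.symm hxu)).2 rfl
        exact ⟨hall x hwx, fun h => absurd h hxu⟩
    have hxu : x ≠ u := fun h => hwv (hleaf.1 (h ▸ hwx).symm)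
    refine ⟨fun hxV => ?_, fun h => absurd h hxu⟩
    have hwx' : (G.induce ({u, v}ᶜ : Set V)).Adj
        ⟨w, mem_compl_pair_iff.2 ⟨hwu, hwv⟩⟩ ⟨x, hxV⟩ := hwx
    refine .force hwx' ?_
    rintro ⟨y, hy⟩ hwy hyx
    exact (ih y hwy fun h => hyx (Subtype.ext h)).1 hy

lemma isSkewForcingSet_induce_iff (huv : G.neighborSet u = {v}) :
    IsSkewForcingSet (G.induce ({u, v}ᶜ : Set V)) S ↔ IsSkewForcingSet G (Subtype.val '' S) := by
  refine ⟨fun hS => ?_, fun hS => Set.eq_univ_of_forall fun x => ?_⟩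
  · have hlift : ∀ x (hx : x ∈ ({u, v}ᶜ : Set V)), x ∈ skewClosure G (Subtype.val '' S) :=
      fun x hx => skewForced_of_skewForced_induce huv (x := ⟨x, hx⟩) (hS.skewForced_s11 _)
    have hu : u ∈ skewClosure G (Subtype.val '' S) := leaf_mem_skewClosure huv
      fun y hvy hyu => hlift y (mem_compl_pair_iff.2 ⟨hyu, (G.ne_of_adj hvy).symm⟩)
    refine Set.eq_univ_of_forall fun x => ?_
    by_cases hxu : x = u
    · rwa [hxu]
    by_cases hxv : x = v
    · rw [hxv]
      exact leafNeighbor_mem_skewClosure huv _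
    exact hlift x (mem_compl_pair_iff.2 ⟨hxu, hxv⟩)
  · exact skewForced_induce_of_skewForced huv (hS.skewForced_s11 x.1) x.2

end Induce

/-- Leaf stripping: deleting a leaf `u` together with its neighbor `v` does not
change the skew forcing number. -/
theorem skewForcingNumber_leaf_strip [Fintype V] (G : SimpleGraph V) (u v : V)
    (huv : G.neighborSet u = {v}) :
    skewForcingNumber (G.induce ({u, v}ᶜ : Set V)) = skewForcingNumber G := by
  obtain ⟨S, hS, hScard⟩ := exists_isSkewForcingSet_ncard_eq (G.induce ({u, v}ᶜ : Set V))
  obtain ⟨B, hB, hBcard⟩ := exists_isSkewForcingSet_ncard_eq G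
  obtain ⟨B₂, hB₂V, hB₂card, hB₂⟩ := exists_isSkewForcingSet_subset_compl huv hB B.toFinite
  have hB₂range : B₂ ⊆ Set.range (Subtype.val : ({u, v}ᶜ : Set V) → V) := by
    rwa [Subtype.range_val]
  apply le_antisymm
  · calc skewForcingNumber (G.induce ({u, v}ᶜ : Set V))
        ≤ (Subtype.val ⁻¹' B₂ : Set ({u, v}ᶜ : Set V)).ncard :=
          skewForcingNumber_le <| (isSkewForcingSet_induce_iff huv).2 <| by
            rwa [Set.image_preimage_eq_of_subset hB₂range]
      _ = B₂.ncard := Set.ncard_preimage_of_injective_subset_range Subtype.val_injective hB₂range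
      _ ≤ skewForcingNumber G := hBcard ▸ hB₂card
  · calc skewForcingNumber G ≤ (Subtype.val '' S).ncard :=
          skewForcingNumber_le ((isSkewForcingSet_induce_iff huv).1 hS)
      _ = skewForcingNumber (G.induce ({u, v}ᶜ : Set V)) := by
          rw [Set.ncard_image_of_injective _ Subtype.val_injective, hScard]
end

section
/- Let $G$ be a connected graph on $n \geq 3$ vertices and suppose $Z_-(G) = 0$. Then $G$ has a unique perfect matching, $n$ is even, and $G$ contains at least one leaf. -/
/-!
Let `t v` be the round in which the skew forcing process started from `∅` turns `v` blue and
`σ v` a vertex forcing it, so every neighbour of `σ v` other than `v` turns blue before `v`.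
If `σ a = σ b` with `a ≠ b`, each of `a`, `b` would turn blue before the other; and `σ (σ v)`,
a neighbour of `σ v`, is `v` or turns blue earlier, so by induction on `t v` the map `σ` is an
involution and the edges `v σ(v)` form a perfect matching. Every perfect matching pairs `σ v`
with `v`: by induction, each earlier neighbour `w` of `σ v` is already matched with `σ w ≠ σ v`.
The forcer of a vertex of minimal round has no other neighbour, so it is a leaf.
-/
open SimpleGraph

variable {V : Type*}

/-- The blue vertices after `k` rounds of the skew color change rule applied in parallel. -/
def skewStage (G : SimpleGraph V) (S : Set V) : ℕ → Set V
  | 0 => S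
  | k + 1 => skewStage G S k ∪
      {v | ∃ u, G.Adj u v ∧ ∀ w, G.Adj u w → w ≠ v → w ∈ skewStage G S k}

theorem skewStage_mono (G : SimpleGraph V) (S : Set V) : Monotone (skewStage G S) :=
  monotone_nat_of_le_succ fun _ => Set.subset_union_left

theorem SkewForced.exists_mem_skewStage [Finite V] {G : SimpleGraph V} {S : Set V} {v : V}
    (h : SkewForced G S v) : ∃ k, v ∈ skewStage G S k := by
  classical
  induction h with
  | mem hv => exact ⟨0, hv⟩
  | @force u v hadj _ ih =>
    have hround : ∀ w, ∃ k, G.Adj u w → w ≠ v → w ∈ skewStage G S k := fun w =>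
      if hw : G.Adj u w ∧ w ≠ v then (ih w hw.1 hw.2).imp fun _ hk _ _ => hk
      else ⟨0, fun h₁ h₂ => absurd ⟨h₁, h₂⟩ hw⟩
    choose f hf using hround
    obtain ⟨K, hK⟩ := Finite.exists_le f
    exact ⟨K + 1, Or.inr ⟨u, hadj, fun w h₁ h₂ => skewStage_mono G S (hK w) (hf w h₁ h₂)⟩⟩

theorem IsSkewForcingSet.exists_round [Finite V] {G : SimpleGraph V} {S : Set V}
    (hS : IsSkewForcingSet G S) :
    ∃ t : V → ℕ, ∀ v ∉ S, ∃ u, G.Adj u v ∧ ∀ w, G.Adj u w → w ≠ v → t w < t v := by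
  classical
  have hmem (v : V) : ∃ k, v ∈ skewStage G S k :=
    SkewForced.exists_mem_skewStage (hS.symm ▸ Set.mem_univ v : v ∈ skewClosure G S)
  refine ⟨fun v => Nat.find (hmem v), fun v hv => ?_⟩
  obtain ⟨k, hk⟩ : ∃ k, Nat.find (hmem v) = k + 1 :=
    Nat.exists_eq_add_one.mpr <| Nat.pos_of_ne_zero fun h0 => hv <| by
      simpa only [h0, skewStage] using Nat.find_spec (hmem v)
  have hv_stage : v ∈ skewStage G S (k + 1) := hk ▸ Nat.find_spec (hmem v)
  have hv_prev : v ∉ skewStage G S k := Nat.find_min (hmem v) (by omega)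
  obtain ⟨u, hadj, hblue⟩ := hv_stage.resolve_left hv_prev
  refine ⟨u, hadj, fun w h₁ h₂ => ?_⟩
  show Nat.find (hmem w) < Nat.find (hmem v)
  exact hk ▸ Nat.lt_succ_of_le (Nat.find_min' _ (hblue w h₁ h₂))

theorem skewForcingNumber_eq_zero_iff [Finite V] (G : SimpleGraph V) :
    skewForcingNumber G = 0 ↔ IsSkewForcingSet G ∅ := by
  constructor
  · intro hz
    have huniv : IsSkewForcingSet G Set.univ :=
      Set.eq_univ_of_forall fun v => SkewForced.mem (Set.mem_univ v)
    obtain ⟨S, hS0, hS⟩ : 0 ∈ {n | ∃ S : Set V, S.ncard = n ∧ IsSkewForcingSet G S} :=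
      hz ▸ Nat.sInf_mem ⟨_, Set.univ, rfl, huniv⟩
    rwa [(Set.ncard_eq_zero S.toFinite).mp hS0] at hS
  · exact fun h => Nat.eq_zero_of_le_zero (Nat.sInf_le ⟨∅, Set.ncard_empty V, h⟩)

/-- A run of the skew forcing process from `∅`: `forcer v` turns `v` blue in round `time v`,
when all its other neighbours are already blue. -/
structure SkewForcingChronology (G : SimpleGraph V) where
  time : V → ℕ
  forcer : V → V
  adj_forcer : ∀ v, G.Adj (forcer v) v
  time_lt : ∀ v w, G.Adj (forcer v) w → w ≠ v → time w < time v

theorem IsSkewForcingSet.nonempty_skewForcingChronology [Finite V] {G : SimpleGraph V}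
    (h : IsSkewForcingSet G ∅) : Nonempty (SkewForcingChronology G) := by
  obtain ⟨t, ht⟩ := h.exists_round
  choose σ hadj hlt using fun v => ht v (Set.notMem_empty v)
  exact ⟨⟨t, σ, hadj, hlt⟩⟩

namespace SkewForcingChronology

variable {G : SimpleGraph V} (c : SkewForcingChronology G)

theorem forcer_injective : Function.Injective c.forcer := by
  intro a b hab
  by_contra hne
  have h₁ := c.time_lt b a (hab ▸ c.adj_forcer a) hne
  have h₂ := c.time_lt a b (hab ▸ c.adj_forcer b) (Ne.symm hne)
  omega

theorem forcer_forcer (v : V) : c.forcer (c.forcer v) = v := by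
  by_contra hne
  have := c.time_lt v _ (c.adj_forcer (c.forcer v)).symm hne
  exact hne (c.forcer_injective (c.forcer_injective (forcer_forcer (c.forcer (c.forcer v)))))
termination_by c.time v

def matching : G.Subgraph where
  verts := Set.univ
  Adj a b := c.forcer a = b
  adj_sub := by
    rintro a _ rfl
    exact (c.adj_forcer a).symm
  edge_vert _ := Set.mem_univ _
  symm := ⟨fun a _ h => h ▸ c.forcer_forcer a⟩

theorem isPerfectMatching_matching : c.matching.IsPerfectMatching :=
  Subgraph.isPerfectMatching_iff.mpr fun v => ⟨c.forcer v, rfl, fun _ h => Eq.symm h⟩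

theorem adj_forcer_of_isPerfectMatching {M : G.Subgraph} (hM : M.IsPerfectMatching) (v : V) :
    M.Adj v (c.forcer v) := by
  obtain ⟨w, hw, -⟩ := Subgraph.isPerfectMatching_iff.mp hM (c.forcer v)
  by_cases hwv : w = v
  · exact hwv ▸ hw.symm
  · have := c.time_lt v w (M.adj_sub hw) hwv
    have hw_forcer : M.Adj w (c.forcer w) := adj_forcer_of_isPerfectMatching hM w
    exact absurd (c.forcer_injective (hM.1.eq_of_adj_left hw_forcer hw.symm)) hwv
termination_by c.time v

theorem eq_matching_of_isPerfectMatching {M : G.Subgraph} (hM : M.IsPerfectMatching) :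
    M = c.matching := by
  refine Subgraph.ext hM.2.verts_eq_univ (funext₂ fun a b => propext ⟨fun h => ?_, ?_⟩)
  · exact hM.1.eq_of_adj_left (c.adj_forcer_of_isPerfectMatching hM a) h
  · rintro rfl
    exact c.adj_forcer_of_isPerfectMatching hM a

theorem exists_neighborSet_eq_singleton [Nonempty V] (c : SkewForcingChronology G) :
    ∃ u w : V, G.neighborSet u = {w} := by
  let v := Function.argmin c.time
  refine ⟨c.forcer v, v, Set.eq_singleton_iff_unique_mem.mpr ⟨c.adj_forcer v, fun w hw => ?_⟩⟩
  by_contra hwv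
  exact absurd (Function.argmin_le c.time w) (not_le.mpr (c.time_lt v w hw hwv))

end SkewForcingChronology

theorem connected_skewForcingNumber_zero_general [Fintype V] (G : SimpleGraph V)
    (hconn : G.Connected)
    (hz : skewForcingNumber G = 0) :
    (∃! M : G.Subgraph, M.IsPerfectMatching) ∧ Even (Fintype.card V) ∧
      ∃ u w : V, G.neighborSet u = {w} := by
  have := hconn.nonempty
  obtain ⟨c⟩ := ((skewForcingNumber_eq_zero_iff G).mp hz).nonempty_skewForcingChronology
  exact ⟨⟨c.matching, c.isPerfectMatching_matching,
      fun _ hM => c.eq_matching_of_isPerfectMatching hM⟩,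
    c.isPerfectMatching_matching.even_card, c.exists_neighborSet_eq_singleton⟩

/-- A connected graph on at least three vertices with skew forcing number zero
has a unique perfect matching, an even number of vertices, and a leaf. -/
theorem connected_skewForcingNumber_zero [Fintype V] (G : SimpleGraph V)
    (hconn : G.Connected) (hn : 3 ≤ Fintype.card V)
    (hz : skewForcingNumber G = 0) :
    (∃! M : G.Subgraph, M.IsPerfectMatching) ∧ Even (Fintype.card V) ∧
      ∃ u w : V, G.neighborSet u = {w} :=
  connected_skewForcingNumber_zero_general G hconn hz
end

section
/- A tree $T$ is skew-nontrivial (i.e., applying the skew forcing rule starting from the empty set produces a proper 2-coloring, equivalently no removed vertices/edges in constructing the skew-nontrivial subgraph) if and only if the distance between every pair of leaves of $T$ is even. -/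
open SimpleGraph

variable {V : Type*}

/-- The set of vertices forced blue by the skew rule from the empty set. -/
def Bnull (G : SimpleGraph V) : Set V := skewClosure G ∅

/-- A graph is skew-nontrivial if the skew process begun at the empty set produces a
proper 2-coloring: every edge joins a forced and an unforced vertex, and every forced
vertex has an unforced neighbor. -/
def SkewNontrivial (G : SimpleGraph V) : Prop :=
  (∀ u v : V, G.Adj u v →
      (u ∈ Bnull G ∧ v ∉ Bnull G) ∨ (u ∉ Bnull G ∧ v ∈ Bnull G)) ∧
  (∀ u ∈ Bnull G, ∃ v : V, G.Adj u v ∧ v ∉ Bnull G)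

/-!
In a skew-nontrivial graph every edge joins a forced and an unforced vertex, so membership in
`Bnull` flips along each step of a walk; a leaf forces its neighbour, hence is itself unforced,
and two leaves are therefore an even distance apart.

Conversely, root the tree at a leaf `l`. A forcing vertex is either a leaf (at even distance
from `l`) or has another, already forced, neighbour; so by induction the forced vertices lie at
odd distance. For the reverse inclusion, an odd vertex `v` is forced by any neighbour `u`,
because every other neighbour `w` of `u` is odd, hence not a leaf, hence forced by one of its own
further neighbours; this recursion runs on the branch of `u` away from `v`, which shrinks
strictly at each step. The odd/even split is then the required bipartition.
-/

namespace SimpleGraph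

variable {G : SimpleGraph V} {u v w : V}

theorem Walk.dist_le_length_of_mem_support (p : G.Walk u v) (hw : w ∈ p.support) :
    G.dist u w ≤ p.length := by
  classical
  exact (dist_le (p.takeUntil w hw)).trans (p.length_takeUntil_le_length hw)

theorem IsAcyclic.eq_of_adj_of_dist_lt (hG : G.IsAcyclic) {z a b c : V} (hab : G.Adj b a)
    (hcb : G.Adj b c) (ha : G.dist z a < G.dist z b) (hc : G.dist z c < G.dist z b) :
    a = c := by
  have hzb : G.Reachable z b := Reachable.of_dist_ne_zero (by omega)
  obtain ⟨p, hp, hpl⟩ := hzb.exists_path_of_dist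
  have mem_support {x : V} (hx : G.Adj b x) (hlt : G.dist z x < G.dist z b) : x ∈ p.support := by
    obtain ⟨q, hq, hql⟩ := (p.reachable.trans hx.reachable).exists_path_of_dist
    refine hG.mem_support_of_ne_mem_support_of_adj_of_isPath hp hq hx fun hb => ?_
    have := q.dist_le_length_of_mem_support hb
    omega
  rw [hG.eq_penultimate_of_adj_end hp hab (mem_support hab ha),
    hG.eq_penultimate_of_adj_end hp hcb (mem_support hcb hc)]

theorem neighborSet_eq_singleton_or_exists_adj_ne (h : G.Adj u v) :
    G.neighborSet u = {v} ∨ ∃ w, G.Adj u w ∧ w ≠ v :=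
  or_iff_not_imp_right.mpr fun hex => Set.eq_singleton_iff_unique_mem.mpr
    ⟨h, fun w hw => by_contra fun hwv => hex ⟨w, hw, hwv⟩⟩

theorem Preconnected.exists_adj_of_ne (hG : G.Preconnected) (h : u ≠ v) : ∃ w, G.Adj u w :=
  (hG u v).elim fun p => ⟨p.snd, p.adj_snd (Walk.not_nil_of_ne h)⟩

theorem IsTree.even_dist_iff_odd_dist_of_adj (hG : G.IsTree) (l : V) (h : G.Adj u v) :
    Even (G.dist l u) ↔ Odd (G.dist l v) := by
  rcases hG.dist_eq_dist_add_one_of_adj l h with h | h <;> rw [h] <;> simp [parity_simps]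

/-- For an edge `ab` of a tree this is the vertex set of the component of `a` in `G - ab`. -/
def branch (G : SimpleGraph V) (a b : V) : Set V := {z | G.dist z a < G.dist z b}

theorem self_mem_branch {a b : V} (hab : G.Adj a b) : a ∈ G.branch a b := by
  simp [branch, dist_eq_one_iff_adj.mpr hab]

theorem right_notMem_branch (a b : V) : b ∉ G.branch a b := by
  simp [branch]

theorem IsAcyclic.branch_subset_branch (hG : G.IsAcyclic) {a b c : V} (hab : G.Adj a b)
    (hbc : G.Adj b c) (hac : a ≠ c) : G.branch a b ⊆ G.branch b c := by
  intro z (hz : G.dist z a < G.dist z b)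
  have hreach : G.Reachable z b := Reachable.of_dist_ne_zero (by omega)
  rcases hG.dist_eq_dist_add_one_of_adj_of_reachable z hbc hreach with hcloser | hfarther
  · exact absurd (hG.eq_of_adj_of_dist_lt hab.symm hbc hz (by omega)) hac
  · show G.dist z b < G.dist z c
    omega

theorem IsAcyclic.branch_ssubset_branch (hG : G.IsAcyclic) {a b c d : V} (hab : G.Adj a b)
    (hbc : G.Adj b c) (hcd : G.Adj c d) (hac : a ≠ c) (hbd : b ≠ d) :
    G.branch d c ⊂ G.branch b a := by
  have hsub : G.branch d c ⊆ G.branch c b :=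
    hG.branch_subset_branch hcd.symm hbc.symm hbd.symm
  refine ⟨hsub.trans (hG.branch_subset_branch hbc.symm hab.symm hac.symm), fun h => ?_⟩
  exact right_notMem_branch c b (hsub (h (self_mem_branch hab.symm)))

end SimpleGraph

section SkewForcing

variable {G : SimpleGraph V} {u v : V}

theorem skewForced_of_neighborSet_eq_singleton {S : Set V} {y : V}
    (hv : G.neighborSet v = {y}) : SkewForced G S y :=
  SkewForced.force (hv.symm ▸ rfl : y ∈ G.neighborSet v) fun w hw hwy =>
    absurd (hv ▸ hw : w ∈ ({y} : Set V)) hwy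

theorem SkewNontrivial.notMem_bnull_of_neighborSet_eq_singleton (h : SkewNontrivial G)
    {y : V} (hv : G.neighborSet v = {y}) : v ∉ Bnull G := fun hvB => by
  obtain ⟨w, hw, hwB⟩ := h.2 v hvB
  obtain rfl : w = y := (hv ▸ hw : w ∈ ({y} : Set V))
  exact hwB (skewForced_of_neighborSet_eq_singleton hv)

theorem SkewNontrivial.even_length_iff (h : SkewNontrivial G) (p : G.Walk u v) :
    Even p.length ↔ (u ∈ Bnull G ↔ v ∈ Bnull G) := by
  classical
  let c : G.Coloring Bool := Coloring.mk (fun w => decide (w ∈ Bnull G)) fun hadj => by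
    rcases h.1 _ _ hadj with ⟨ha, hb⟩ | ⟨ha, hb⟩ <;> simp [ha, hb]
  simpa [c, Coloring.mk] using c.even_length_iff_congr p

theorem SkewNontrivial.even_dist (h : SkewNontrivial G) {x y : V}
    (hu : G.neighborSet u = {x}) (hv : G.neighborSet v = {y}) : Even (G.dist u v) := by
  by_cases huv : G.Reachable u v
  · obtain ⟨p, hp⟩ := huv.exists_walk_length_eq_dist
    rw [← hp, h.even_length_iff p]
    simp [h.notMem_bnull_of_neighborSet_eq_singleton hu,
      h.notMem_bnull_of_neighborSet_eq_singleton hv]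
  · simp [dist_eq_zero_of_not_reachable huv]

end SkewForcing

namespace SimpleGraph.IsTree

variable {T : SimpleGraph V} {l : V}

theorem odd_dist_of_mem_bnull (hT : T.IsTree)
    (hl : ∀ v, (∃ y, T.neighborSet v = {y}) → Even (T.dist l v)) {v : V}
    (hv : v ∈ Bnull T) : Odd (T.dist l v) := by
  change SkewForced T ∅ v at hv
  induction hv with
  | mem h => exact absurd h (Set.notMem_empty _)
  | @force u v huv _ ih =>
    refine (hT.even_dist_iff_odd_dist_of_adj l huv).mp ?_
    rcases neighborSet_eq_singleton_or_exists_adj_ne huv with hleaf | ⟨w, huw, hwv⟩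
    · exact hl u ⟨v, hleaf⟩
    · exact (hT.even_dist_iff_odd_dist_of_adj l huw).mpr (ih w huw hwv)

theorem skewForced_of_adj_of_odd_dist [Finite V] (hT : T.IsTree)
    (hl : ∀ v, (∃ y, T.neighborSet v = {y}) → Even (T.dist l v)) {u v : V} (huv : T.Adj u v)
    (hv : Odd (T.dist l v)) : SkewForced T ∅ v := by
  induction hS : T.branch u v using WellFoundedLT.induction generalizing u v with
  | ind S ih =>
  refine SkewForced.force huv fun w huw hwv => ?_
  have hw : Odd (T.dist l w) :=
    (hT.even_dist_iff_odd_dist_of_adj l huw).mp ((hT.even_dist_iff_odd_dist_of_adj l huv).mpr hv)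
  rcases neighborSet_eq_singleton_or_exists_adj_ne huw.symm with hleaf | ⟨x, hwx, hxu⟩
  · exact absurd (hl w ⟨u, hleaf⟩) (Nat.not_even_iff_odd.mpr hw)
  · exact ih _ (hS ▸ hT.isAcyclic.branch_ssubset_branch huv.symm huw hwx hwv.symm hxu.symm)
      hwx.symm hw rfl

theorem bnull_eq_setOf_odd_dist [Finite V] (hT : T.IsTree)
    (hl : ∀ v, (∃ y, T.neighborSet v = {y}) → Even (T.dist l v)) :
    Bnull T = {v | Odd (T.dist l v)} := by
  ext v
  refine ⟨hT.odd_dist_of_mem_bnull hl, fun hv => ?_⟩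
  have hvl : v ≠ l := by
    rintro rfl
    simp at hv
  obtain ⟨u, hvu⟩ := hT.connected.preconnected.exists_adj_of_ne hvl
  exact hT.skewForced_of_adj_of_odd_dist hl hvu.symm hv

theorem skewNontrivial_of_bnull_eq_setOf_odd_dist (hT : T.IsTree)
    (hB : Bnull T = {v | Odd (T.dist l v)}) : SkewNontrivial T := by
  rw [SkewNontrivial, hB]
  refine ⟨fun u v huv => ?_, fun u hu => ?_⟩
  · have := hT.even_dist_iff_odd_dist_of_adj l huv
    simp only [Set.mem_ofPred_eq, ← Nat.not_even_iff_odd] at this ⊢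
    tauto
  · have hul : u ≠ l := by
      rintro rfl
      simp at hu
    obtain ⟨v, huv⟩ := hT.connected.preconnected.exists_adj_of_ne hul
    have hv : Even (T.dist l v) := (hT.even_dist_iff_odd_dist_of_adj l huv.symm).mpr hu
    exact ⟨v, huv, Nat.not_odd_iff_even.mpr hv⟩

end SimpleGraph.IsTree

/-- A tree is skew-nontrivial iff every pair of leaves is at even distance. -/
theorem tree_skewNontrivial_iff_leaf_dists_even [Fintype V] (T : SimpleGraph V)
    (hT : T.IsTree) :
    SkewNontrivial T ↔
      ∀ u v : V, (∃ x, T.neighborSet u = {x}) → (∃ y, T.neighborSet v = {y}) →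
        Even (T.dist u v) := by
  refine ⟨fun h u v ⟨x, hu⟩ ⟨y, hv⟩ => h.even_dist hu hv, fun hleaves => ?_⟩
  -- A leafless finite tree is a single vertex, and then any root will do.
  obtain ⟨l, hl⟩ : ∃ l, ∀ v, (∃ y, T.neighborSet v = {y}) → Even (T.dist l v) := by
    by_cases hleaf : ∃ l, ∃ x, T.neighborSet l = {x}
    · obtain ⟨l, hl⟩ := hleaf
      exact ⟨l, fun v hv => hleaves l v hl hv⟩
    · exact ⟨hT.connected.nonempty.some, fun v hv => absurd ⟨v, hv⟩ hleaf⟩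
  exact hT.skewNontrivial_of_bnull_eq_setOf_odd_dist (hT.bnull_eq_setOf_odd_dist hl)
end

section
/- Let $T$ be a tree. The subgraph of $T$ induced by $W^{\emptyset}_-(T)$ (the set of vertices not forced by the empty set under the skew rule) contains no edges. -/
open SimpleGraph

variable {V : Type*}

/-- In a tree, the set of vertices not forced by the empty set under the skew rule
induces a subgraph with no edges. -/
theorem tree_white_set_no_edges [Fintype V] (T : SimpleGraph V) (hT : T.IsTree) :
    ∀ u v : V, u ∉ skewClosure T ∅ → v ∉ skewClosure T ∅ → ¬ T.Adj u v := by
  classical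
  intro u v hu hv hadj
  have key : ∀ n : ℕ, ∃ (a c b : V) (h : T.Adj a c) (q : T.Walk c b),
      (Walk.cons h q).IsPath ∧ (Walk.cons h q).length = n + 1 ∧
      a ∉ skewClosure T ∅ ∧ c ∉ skewClosure T ∅ := by
    intro n
    induction n with
    | zero =>
      exact ⟨u, v, v, hadj, Walk.nil, by simp [Walk.isPath_def, hadj.ne, hadj.ne'], by simp, hu, hv⟩
    | succ n ih =>
      obtain ⟨a, c, b, h, q, hpath, hlen, ha, hc⟩ := ih
      have hcons := (Walk.cons_isPath_iff h q).mp hpath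
      have hw : ∃ w, T.Adj a w ∧ w ≠ c ∧ w ∉ skewClosure T ∅ := by
        by_contra hcon
        push_neg at hcon
        exact hc (SkewForced.force h (fun w hw hne => hcon w hw hne))
      obtain ⟨w, haw, hwc, hwcl⟩ := hw
      have hwsup : w ∉ (Walk.cons h q).support := by
        intro hmem
        rw [Walk.support_cons] at hmem
        rcases List.mem_cons.mp hmem with h1 | h2
        · exact haw.ne h1.symm
        · -- w ∈ q.support : derive a contradiction using uniqueness of paths
          have hrpath : (q.takeUntil w h2).IsPath := hcons.1.takeUntil h2
          have hs : (Walk.cons h.symm (Walk.cons haw Walk.nil) : T.Walk c w).IsPath := by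
            simp [Walk.isPath_def, h.ne', haw.ne, hwc.symm]
          have heq := hT.IsAcyclic.path_unique ⟨q.takeUntil w h2, hrpath⟩ ⟨_, hs⟩
          have heq' : q.takeUntil w h2 = Walk.cons h.symm (Walk.cons haw Walk.nil) :=
            congrArg Subtype.val heq
          have hasup : a ∈ (q.takeUntil w h2).support := by
            rw [heq']; simp
          exact hcons.2 (Walk.support_takeUntil_subset q h2 hasup)
      refine ⟨w, a, b, haw.symm, Walk.cons h q, ?_, by simp [hlen], hwcl, ha⟩
      rw [Walk.cons_isPath_iff]
      exact ⟨hpath, hwsup⟩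
  obtain ⟨a, c, b, h, q, hpath, hlen, _, _⟩ := key (Fintype.card V)
  have := hpath.length_lt
  omega
end

section
/- Let $T$ be a skew-nontrivial tree and $u \in B^{\emptyset}_-(T)$. Then $\deg(u) \geq 2$. Consequently, $Z_-(T) = |V(T)| - 2|B^{\emptyset}_-(T)|$. -/
open SimpleGraph

variable {V : Type*}

/-! ### Auxiliary machinery -/

/-- Forcing within `n` rounds. -/
def ForcedIn (G : SimpleGraph V) (S : Set V) : ℕ → V → Prop
  | 0, v => v ∈ S
  | n+1, v => v ∈ S ∨ ∃ u, G.Adj u v ∧ ∀ w, G.Adj u w → w ≠ v → ForcedIn G S n w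

lemma forcedIn_mono {G : SimpleGraph V} {S : Set V} :
    ∀ {n m : ℕ}, m ≤ n → ∀ {v}, ForcedIn G S m v → ForcedIn G S n v := by
  intro n
  induction n with
  | zero => intro m hm v hv; obtain rfl := Nat.le_zero.mp hm; exact hv
  | succ n ih =>
    intro m hm v hv
    match m, hv with
    | 0, hv => exact Or.inl hv
    | m+1, hv =>
      rcases hv with h | ⟨u, h1, h2⟩
      · exact Or.inl h
      · exact Or.inr ⟨u, h1, fun w hw hne => ih (Nat.succ_le_succ_iff.mp hm) (h2 w hw hne)⟩

lemma skewForced_iff_exists_forcedIn [Fintype V] {G : SimpleGraph V} {S : Set V} {v : V} :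
    SkewForced G S v ↔ ∃ n, ForcedIn G S n v := by
  classical
  constructor
  · intro h
    induction h with
    | mem h => exact ⟨0, h⟩
    | @force u v hadj h ih =>
      refine ⟨(Finset.univ.sup fun w => sInf {n | ForcedIn G S n w}) + 1,
        Or.inr ⟨u, hadj, fun w hw hne => ?_⟩⟩
      have h1 : ForcedIn G S (sInf {n | ForcedIn G S n w}) w :=
        Nat.sInf_mem (s := {n | ForcedIn G S n w}) (ih w hw hne)
      exact forcedIn_mono (Finset.le_sup (Finset.mem_univ w)) h1
  · rintro ⟨n, h⟩
    induction n generalizing v with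
    | zero => exact .mem h
    | succ n ih =>
      rcases h with h | ⟨u, h1, h2⟩
      · exact .mem h
      · exact .force h1 fun w hw hne => ih (h2 w hw hne)

/-- Every forced vertex outside `S` has a "forcer", and distinct forced vertices have
distinct forcers. -/
lemma exists_forcer [Fintype V] (G : SimpleGraph V) (S : Set V) :
    ∃ F : V → V, (∀ v, SkewForced G S v → v ∉ S → G.Adj (F v) v) ∧
      ∀ v w, SkewForced G S v → v ∉ S → SkewForced G S w → w ∉ S →
        F v = F w → v = w := by
  classical
  have key : ∀ v, SkewForced G S v → v ∉ S →
      ∃ u, G.Adj u v ∧ ∀ w, G.Adj u w → w ≠ v → SkewForced G S w ∧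
        sInf {n | ForcedIn G S n w} < sInf {n | ForcedIn G S n v} := by
    intro v hv hvS
    obtain ⟨n, hn⟩ := skewForced_iff_exists_forcedIn.mp hv
    have hdv : ForcedIn G S (sInf {n | ForcedIn G S n v}) v :=
      Nat.sInf_mem (s := {n | ForcedIn G S n v}) ⟨n, hn⟩
    obtain ⟨k, hk⟩ : ∃ k, sInf {n | ForcedIn G S n v} = k + 1 := by
      rcases Nat.eq_zero_or_pos (sInf {n | ForcedIn G S n v}) with h0 | hpos
      · exact absurd (show ForcedIn G S 0 v from h0 ▸ hdv) hvS
      · exact ⟨sInf {n | ForcedIn G S n v} - 1, by omega⟩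
    rw [hk] at hdv
    rcases hdv with h | ⟨u, h1, h2⟩
    · exact absurd h hvS
    · refine ⟨u, h1, fun w hw hne => ⟨skewForced_iff_exists_forcedIn.mpr ⟨k, h2 w hw hne⟩, ?_⟩⟩
      have : sInf {n | ForcedIn G S n w} ≤ k := Nat.sInf_le (h2 w hw hne)
      omega
  refine ⟨fun v => if h : SkewForced G S v ∧ v ∉ S then (key v h.1 h.2).choose else v, ?_, ?_⟩
  · intro v hv hvS
    beta_reduce
    rw [dif_pos ⟨hv, hvS⟩]
    exact (key v hv hvS).choose_spec.1
  · intro v w hv hvS hw hwS hvw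
    by_contra hne
    beta_reduce at hvw
    rw [dif_pos ⟨hv, hvS⟩, dif_pos ⟨hw, hwS⟩] at hvw
    have h1 := (key v hv hvS).choose_spec
    have h2 := (key w hw hwS).choose_spec
    have hwadj : G.Adj (key v hv hvS).choose w := by rw [hvw]; exact h2.1
    have hvadj : G.Adj (key w hw hwS).choose v := by rw [← hvw]; exact h1.1
    have c1 := (h1.2 w hwadj (Ne.symm hne)).2
    have c2 := (h2.2 v hvadj hne).2
    omega

/-- Skew forcing where all forcers are required to lie in `K`. -/
inductive SkewForcedOn (G : SimpleGraph V) (K S : Set V) : V → Prop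
  | mem : ∀ {v}, v ∈ S → SkewForcedOn G K S v
  | force : ∀ {u v}, u ∈ K → G.Adj u v →
      (∀ w, G.Adj u w → w ≠ v → SkewForcedOn G K S w) → SkewForcedOn G K S v

lemma SkewForcedOn.toSkewForced {G : SimpleGraph V} {K S : Set V} {v : V}
    (h : SkewForcedOn G K S v) : SkewForced G S v := by
  induction h with
  | mem h => exact .mem h
  | force hK hadj h ih => exact .force hadj ih

lemma SkewForcedOn.transfer {G : SimpleGraph V} {K K' S S' : Set V}
    (hK : K ⊆ K')
    (hS' : ∀ x ∈ S', x ∈ S ∨ SkewForcedOn G K' S x ∨ ∀ u ∈ K, ¬ G.Adj u x)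
    {v : V} (h : SkewForcedOn G K S' v) : v ∈ S' ∨ SkewForcedOn G K' S v := by
  induction h with
  | mem h => exact Or.inl h
  | @force u v hu hadj h ih =>
    refine Or.inr (.force (hK hu) hadj fun w hw hne => ?_)
    rcases ih w hw hne with hw' | hw'
    · rcases hS' w hw' with h1 | h1 | h1
      · exact .mem h1
      · exact h1
      · exact absurd hw (h1 u hu)
    · exact hw'

lemma color_walk {G : SimpleGraph V} {C : Set V}
    (hcross : ∀ u v, G.Adj u v → (u ∈ C ↔ v ∉ C))
    {x y : V} (p : G.Walk x y) : (x ∈ C ↔ y ∈ C) ↔ Even p.length := by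
  induction p with
  | nil => simp
  | @cons a b c h p ih =>
    rw [Walk.length_cons, Nat.even_add_one, ← ih]
    have := hcross _ _ h
    tauto

/-- In a tree that is properly 2-colored by `C`, any finite set `R` all of whose members
have neighbors inside `R` contains a vertex with exactly one neighbor in `R`. -/
lemma exists_leaf {T : SimpleGraph V} {C : Set V} (hT : T.IsTree)
    (hcross : ∀ u v, T.Adj u v → (u ∈ C ↔ v ∉ C))
    {R : Set V} (hfin : R.Finite) (hne : R.Nonempty)
    (hpart : ∀ x ∈ R, ∃ y ∈ R, T.Adj x y) :
    ∃ ℓ ∈ R, ∃ q ∈ R, T.Adj ℓ q ∧ ∀ w ∈ R, T.Adj ℓ w → w = q := by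
  classical
  obtain ⟨a0, ha0⟩ := hne
  obtain ⟨ℓ, hℓR, hmax⟩ := Set.exists_max_image R (fun x => T.dist a0 x) hfin ⟨a0, ha0⟩
  have hconn := hT.isConnected
  have hpar : ∀ x y, T.Adj x y → T.dist a0 x ≠ T.dist a0 y := by
    intro x y hxy hEq
    obtain ⟨px, hpx⟩ := hconn.exists_walk_length_eq_dist a0 x
    obtain ⟨py, hpy⟩ := hconn.exists_walk_length_eq_dist a0 y
    have h1 := color_walk hcross px
    have h2 := color_walk hcross py
    rw [hpx, hEq] at h1
    rw [hpy] at h2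
    have h3 := hcross x y hxy
    tauto
  have build : ∀ z ∈ R, T.Adj ℓ z → ∃ p : T.Walk ℓ a0, p.IsPath ∧ p.getVert 1 = z := by
    intro z hz hadj
    obtain ⟨p0, hp0⟩ := hconn.exists_walk_length_eq_dist a0 z
    have hpath : p0.bypass.IsPath := p0.bypass_isPath
    have hlen : p0.bypass.length < T.dist a0 ℓ := by
      have h1 : p0.bypass.length ≤ T.dist a0 z := le_trans p0.length_bypass_le (le_of_eq hp0)
      have h2 : T.dist a0 z ≤ T.dist a0 ℓ := hmax z hz
      have h3 := hpar ℓ z hadj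
      omega
    have hns : ℓ ∉ p0.bypass.support := by
      intro hmem
      have h4 := T.dist_le (p0.bypass.takeUntil ℓ hmem)
      have h5 := p0.bypass.length_takeUntil_le hmem
      omega
    refine ⟨Walk.cons hadj p0.bypass.reverse, ?_, ?_⟩
    · refine (Walk.cons_isPath_iff _ _).2 ⟨hpath.reverse, ?_⟩
      rwa [Walk.support_reverse, List.mem_reverse]
    · simp [Walk.getVert_cons_succ]
  obtain ⟨q, hqR, hq⟩ := hpart ℓ hℓR
  refine ⟨ℓ, hℓR, q, hqR, hq, fun w hwR hadj => ?_⟩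
  obtain ⟨pw, hpw, hw1⟩ := build w hwR hadj
  obtain ⟨pq, hpq, hq1⟩ := build q hqR hq
  have : pw = pq := (hT.existsUnique_path ℓ a0).unique hpw hpq
  rw [← hw1, ← hq1, this]

/-- Key induction: given a matching `f` of the color class into its complement in a tree,
each matched pair set forces itself starting from its complement. -/
lemma claim_forces [Fintype V] {T : SimpleGraph V} {C : Set V} (hT : T.IsTree)
    (hcross : ∀ u v, T.Adj u v → (u ∈ C ↔ v ∉ C))
    (f : V → V) (hfadj : ∀ b ∈ C, T.Adj (f b) b)
    (hfinj : ∀ b ∈ C, ∀ b' ∈ C, f b = f b' → b = b') :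
    ∀ A : Finset V, ↑A ⊆ C → ∀ v ∈ (↑A ∪ f '' ↑A : Set V),
      SkewForcedOn T (↑A ∪ f '' ↑A) ((↑A ∪ f '' ↑A : Set V)ᶜ) v := by
  classical
  intro A
  induction A using Finset.strongInduction with
  | _ A ih =>
    intro hA v hv
    have hfC : ∀ b ∈ C, f b ∉ C := fun b hb h => (hcross (f b) b (hfadj b hb)).mp h hb
    set R : Set V := ↑A ∪ f '' ↑A with hRdef
    have hfin : R.Finite := (A.finite_toSet).union (A.finite_toSet.image f)
    have hpart : ∀ x ∈ R, ∃ y ∈ R, T.Adj x y := by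
      rintro x (hx | ⟨b, hb, rfl⟩)
      · exact ⟨f x, Or.inr ⟨x, hx, rfl⟩, (hfadj x (hA hx)).symm⟩
      · exact ⟨b, Or.inl hb, hfadj b (hA hb)⟩
    obtain ⟨ℓ, hℓR, q, hqR, hadjq, hleaf⟩ := exists_leaf hT hcross hfin ⟨v, hv⟩ hpart
    obtain ⟨b, hbA, hset⟩ : ∃ b ∈ A, ({ℓ, q} : Set V) = {b, f b} := by
      rcases hℓR with h | ⟨b, hb, rfl⟩
      · have he : f ℓ = q := hleaf (f ℓ) (Or.inr ⟨ℓ, h, rfl⟩) (hfadj ℓ (hA h)).symm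
        exact ⟨ℓ, h, by rw [← he]⟩
      · have he : b = q := hleaf b (Or.inl hb) (hfadj b (hA hb))
        exact ⟨b, hb, by rw [← he, Set.pair_comm]⟩
    have himg : f '' (↑A \ {b} : Set V) = f '' ↑A \ {f b} := by
      ext x
      constructor
      · rintro ⟨a, ⟨haA, hab⟩, rfl⟩
        exact ⟨⟨a, haA, rfl⟩, fun hx => hab (hfinj a (hA haA) b (hA hbA) hx)⟩
      · rintro ⟨⟨a, haA, rfl⟩, hne⟩
        exact ⟨a, ⟨haA, fun h => hne (show f a ∈ ({f b} : Set V) from by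
          rw [Set.mem_singleton_iff] at h ⊢; rw [h])⟩, rfl⟩
    have hbni : b ∉ (f '' ↑A : Set V) := by
      rintro ⟨a, haA, heq⟩
      exact hfC a (hA haA) (heq ▸ hA hbA)
    have hfbnA : f b ∉ (↑A : Set V) := fun h => hfC b (hA hbA) (hA h)
    have hR' : (↑(A.erase b) ∪ f '' ↑(A.erase b) : Set V) = R \ {ℓ, q} := by
      rw [hset, Finset.coe_erase, himg]
      ext x
      simp only [Set.mem_union, Set.mem_diff, Set.mem_singleton_iff, Set.mem_insert_iff, hRdef]
      constructor
      · rintro (⟨h1, h2⟩ | ⟨h1, h2⟩)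
        · exact ⟨Or.inl h1, by rintro (rfl | rfl); exacts [h2 rfl, hfbnA h1]⟩
        · exact ⟨Or.inr h1, by rintro (rfl | rfl); exacts [hbni h1, h2 rfl]⟩
      · rintro ⟨h1 | h1, h2⟩
        · exact Or.inl ⟨h1, fun h => h2 (Or.inl h)⟩
        · exact Or.inr ⟨h1, fun h => h2 (Or.inr h)⟩
    have hq_forced : SkewForcedOn T R Rᶜ q :=
      .force hℓR hadjq fun w hw hne => .mem fun hwR => hne (hleaf w hwR hw)
    have hS' : ∀ y ∈ ((R \ {ℓ, q})ᶜ : Set V),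
        y ∈ (Rᶜ : Set V) ∨ SkewForcedOn T R Rᶜ y ∨ ∀ u ∈ R \ {ℓ, q}, ¬ T.Adj u y := by
      intro y hy
      by_cases hyR : y ∈ R
      · have hy2 : y = ℓ ∨ y = q := by
          by_contra hc
          push_neg at hc
          exact hy ⟨hyR, by rintro (rfl | rfl); exacts [hc.1 rfl, hc.2 rfl]⟩
        rcases hy2 with rfl | rfl
        · refine Or.inr (Or.inr fun u hu hadj => ?_)
          have h5 := hleaf u hu.1 hadj.symm
          exact hu.2 (by rw [h5]; exact Or.inr rfl)
        · exact Or.inr (Or.inl hq_forced)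
      · exact Or.inl hyR
    have htrans : ∀ x ∈ R \ ({ℓ, q} : Set V), SkewForcedOn T R Rᶜ x := by
      intro x hx
      have hx' : SkewForcedOn T (R \ {ℓ, q}) ((R \ {ℓ, q})ᶜ) x := by
        rw [← hR']
        exact ih (A.erase b) (Finset.erase_ssubset hbA)
          (fun y hy => hA (Finset.mem_coe.mpr (Finset.erase_subset _ _ (Finset.mem_coe.mp hy))))
          x (hR'.symm ▸ hx)
      rcases SkewForcedOn.transfer Set.diff_subset hS' hx' with h | h
      · exact absurd hx h
      · exact h
    have hℓ_forced : SkewForcedOn T R Rᶜ ℓ := by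
      refine .force hqR hadjq.symm fun w hw hne => ?_
      by_cases hwR : w ∈ R
      · exact htrans w ⟨hwR, by rintro (rfl | rfl); exacts [hne rfl, hw.ne rfl]⟩
      · exact .mem hwR
    rcases eq_or_ne v ℓ with rfl | h1
    · exact hℓ_forced
    rcases eq_or_ne v q with rfl | h2
    · exact hq_forced
    exact htrans v ⟨hv, by rintro (rfl | rfl); exacts [h1 rfl, h2 rfl]⟩

/-- In a skew-nontrivial tree, every vertex forced by the empty set has degree at
least two; consequently `Z₋(T) = |V(T)| - 2|B∅₋(T)|`. -/
theorem skewNontrivial_tree_degree_and_number [Fintype V] (T : SimpleGraph V)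
    (hT : T.IsTree) (hnt : SkewNontrivial T) :
    (∀ u ∈ Bnull T, 2 ≤ (T.neighborSet u).ncard) ∧
    skewForcingNumber T = Fintype.card V - 2 * (Bnull T).ncard := by
  classical
  obtain ⟨hcross', hwn⟩ := hnt
  have hcross : ∀ u v, T.Adj u v → (u ∈ Bnull T ↔ v ∉ Bnull T) := by
    intro u v h
    rcases hcross' u v h with ⟨h1, h2⟩ | ⟨h1, h2⟩
    · exact ⟨fun _ => h2, fun _ => h1⟩
    · exact ⟨fun h' => absurd h' h1, fun h' => absurd h2 h'⟩
  have part1 : ∀ u ∈ Bnull T, 2 ≤ (T.neighborSet u).ncard := by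
    intro u hu
    obtain ⟨v, hadj, hvB⟩ := hwn u hu
    by_contra hlt
    push_neg at hlt
    have h1 : 1 ≤ (T.neighborSet u).ncard := by
      have hsub : ({v} : Set V) ⊆ T.neighborSet u := by simp [hadj]
      calc 1 = ({v} : Set V).ncard := (Set.ncard_singleton v).symm
        _ ≤ _ := Set.ncard_le_ncard hsub (Set.toFinite _)
    have h2 : (T.neighborSet u).ncard = 1 := by omega
    obtain ⟨a, ha⟩ := Set.ncard_eq_one.mp h2
    have hav : a = v := by
      have hv' : v ∈ T.neighborSet u := hadj
      rw [ha] at hv'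
      exact hv'.symm
    subst hav
    refine hvB (SkewForced.force hadj fun w hw hne => ?_)
    exfalso
    have hw' : w ∈ T.neighborSet u := hw
    rw [ha] at hw'
    exact hne hw'
  refine ⟨part1, ?_⟩
  set B := Bnull T with hB
  have hBfin : B.Finite := Set.toFinite _
  have hWfin : (Bᶜ : Set V).Finite := Set.toFinite _
  obtain ⟨f, hfadj0, hfinj0⟩ := exists_forcer T (∅ : Set V)
  have hfB : ∀ b ∈ B, SkewForced T ∅ b := fun b hb => hb
  have hfadj : ∀ b ∈ B, T.Adj (f b) b := fun b hb =>
    hfadj0 b (hfB b hb) (Set.notMem_empty b)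
  have hfinj : ∀ b ∈ B, ∀ b' ∈ B, f b = f b' → b = b' := fun b hb b' hb' h =>
    hfinj0 b b' (hfB b hb) (Set.notMem_empty b) (hfB b' hb') (Set.notMem_empty b') h
  have hfW : ∀ b ∈ B, f b ∉ B := fun b hb h => (hcross (f b) b (hfadj b hb)).mp h hb
  have himgsub : f '' B ⊆ Bᶜ := by rintro x ⟨b, hb, rfl⟩; exact hfW b hb
  have himgcard : (f '' B).ncard = B.ncard := Set.ncard_image_of_injOn hfinj
  have hcard1 : B.ncard + (Bᶜ : Set V).ncard = Fintype.card V := by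
    rw [Set.ncard_add_ncard_compl, Nat.card_eq_fintype_card]
  have hle : B.ncard ≤ (Bᶜ : Set V).ncard := by
    rw [← himgcard]
    exact Set.ncard_le_ncard himgsub hWfin
  set S0 : Set V := Bᶜ \ f '' B with hS0
  have hS0card : S0.ncard = (Bᶜ : Set V).ncard - B.ncard := by
    rw [hS0, Set.ncard_diff himgsub, himgcard]
  have hforce : IsSkewForcingSet T S0 := by
    apply Set.eq_univ_of_forall
    intro v
    show SkewForced T S0 v
    by_cases hv : v ∈ (B ∪ f '' B : Set V)
    · have hA : ↑(hBfin.toFinset) ⊆ B := by rw [Set.Finite.coe_toFinset]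
      have hveq : v ∈ (↑hBfin.toFinset ∪ f '' ↑hBfin.toFinset : Set V) := by
        rwa [hBfin.coe_toFinset]
      have h := (claim_forces hT hcross f hfadj hfinj hBfin.toFinset hA v hveq).toSkewForced
      have heq : ((↑hBfin.toFinset ∪ f '' ↑hBfin.toFinset : Set V))ᶜ = S0 := by
        rw [hBfin.coe_toFinset, hS0, Set.compl_union, Set.diff_eq]
      rwa [heq] at h
    · exact .mem ⟨fun h => hv (Or.inl h), fun h => hv (Or.inr h)⟩
  have hlower : ∀ S : Set V, IsSkewForcingSet T S →
      Fintype.card V - 2 * B.ncard ≤ S.ncard := by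
    intro S hS
    obtain ⟨F, hFadj, hFinj⟩ := exists_forcer T S
    have hforced : ∀ w : V, SkewForced T S w := by
      intro w
      have : w ∈ skewClosure T S := by rw [hS]; trivial
      exact this
    have hmaps : ∀ w ∈ (Bᶜ \ S : Set V), F w ∈ B := by
      intro w hw
      have hadj := hFadj w (hforced w) hw.2
      exact (hcross (F w) w hadj).mpr hw.1
    have hinj : Set.InjOn F (Bᶜ \ S) := fun x hx y hy h =>
      hFinj x y (hforced x) hx.2 (hforced y) hy.2 h
    have h1 : (Bᶜ \ S : Set V).ncard ≤ B.ncard :=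
      Set.ncard_le_ncard_of_injOn F hmaps hinj hBfin
    have h2 : ((Bᶜ ∩ S : Set V).ncard + (Bᶜ \ S : Set V).ncard = (Bᶜ : Set V).ncard) :=
      Set.ncard_inter_add_ncard_diff_eq_ncard Bᶜ S hWfin
    have h3 : (Bᶜ ∩ S : Set V).ncard ≤ S.ncard :=
      Set.ncard_le_ncard Set.inter_subset_right (Set.toFinite _)
    omega
  have hmem : Fintype.card V - 2 * B.ncard ∈
      {n | ∃ S : Set V, S.ncard = n ∧ IsSkewForcingSet T S} := by
    refine ⟨S0, ?_, hforce⟩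
    rw [hS0card]
    omega
  show sInf {n | ∃ S : Set V, S.ncard = n ∧ IsSkewForcingSet T S} =
    Fintype.card V - 2 * B.ncard
  apply le_antisymm
  · exact Nat.sInf_le hmem
  · refine le_csInf ⟨_, hmem⟩ ?_
    rintro n ⟨S, rfl, hS⟩
    exact hlower S hS
end

section
/- Let $G$ be a graph with bipartition $\{U_1, U_2\}$ such that every leaf of $G$ lies in $U_1$. Then applying the skew forcing rule to the empty set never forces any vertex of $U_1$; in particular no vertex of $U_1$ is in $B^{\emptyset}_-(G)$. -/
open SimpleGraph

variable {V : Type*}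

/-- In a bipartite graph whose leaves all lie in `U₁`, the skew process started at the
empty set never forces a vertex of `U₁`. -/
theorem bipartite_leaves_side_unforced [Fintype V] (G : SimpleGraph V) (U₁ U₂ : Set V)
    (hcov : ∀ v : V, v ∈ U₁ ∨ v ∈ U₂) (hdisj : ∀ v : V, ¬(v ∈ U₁ ∧ v ∈ U₂))
    (hedge : ∀ u v : V, G.Adj u v → (u ∈ U₁ ∧ v ∈ U₂) ∨ (u ∈ U₂ ∧ v ∈ U₁))
    (hleaf : ∀ u : V, (∃ w : V, G.neighborSet u = {w}) → u ∈ U₁) :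
    ∀ u ∈ U₁, u ∉ skewClosure G ∅ := by
  have key : ∀ v : V, SkewForced G ∅ v → v ∈ U₂ := by
    intro v h
    induction h with
    | mem h => exact absurd h (Set.notMem_empty _)
    | @force u v hadj hall ih =>
      rcases hedge u v hadj with ⟨_, hv2⟩ | ⟨hu2, hv1⟩
      · exact hv2
      · exfalso
        have honly : ∀ w, G.Adj u w → w = v := by
          intro w hw
          by_contra hne
          have hw2 := ih w hw hne
          rcases hedge u w hw with ⟨hu1, _⟩ | ⟨_, hw1⟩
          · exact hdisj u ⟨hu1, hu2⟩
          · exact hdisj w ⟨hw1, hw2⟩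
        have : G.neighborSet u = {v} := by
          ext w
          simp only [mem_neighborSet, Set.mem_singleton_iff]
          exact ⟨honly w, fun h => h ▸ hadj⟩
        exact hdisj u ⟨hleaf u ⟨v, this⟩, hu2⟩
  intro u hu hcl
  exact hdisj u ⟨hu, key u hcl⟩
end

section
/- Let $G$ be a graph, $F$ a PSD fort of $G$, and $v \in F$. Then the vertex set of the connected component of the induced subgraph $G[F]$ containing $v$ is also a PSD fort of $G$. -/
open SimpleGraph

variable {V : Type*}

/-- A PSD fort: a nonempty set `F` such that for every vertex `v` outside `F` and
every connected component `C` of the induced subgraph on `F`, `v` does not have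
exactly one neighbor in `C`. -/
def PSDFort (G : SimpleGraph V) (F : Set V) : Prop :=
  F.Nonempty ∧ ∀ v ∉ F, ∀ C : (G.induce F).ConnectedComponent,
    (G.neighborSet v ∩ (Subtype.val '' C.supp)).ncard ≠ 1

/-- The vertex set of any connected component of the subgraph induced by a PSD fort
is itself a PSD fort. -/
theorem psdFort_component [Fintype V] (G : SimpleGraph V) (F : Set V)
    (hF : PSDFort G F) (v : V) (hv : v ∈ F) :
    PSDFort G (Subtype.val '' ((G.induce F).connectedComponentMk ⟨v, hv⟩).supp) := by
  obtain ⟨hne, hf⟩ := hF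
  set K := (G.induce F).connectedComponentMk ⟨v, hv⟩ with hK
  set S : Set V := Subtype.val '' K.supp with hS
  have hSF : S ⊆ F := by rintro x ⟨y, _, rfl⟩; exact y.2
  have hmem : ∀ x : F, (x : V) ∈ S ↔ (G.induce F).connectedComponentMk x = K := by
    intro x
    constructor
    · rintro ⟨y, hy, hxy⟩
      have : y = x := Subtype.ext hxy
      subst this; exact hy
    · intro h; exact ⟨x, h, rfl⟩
  -- walking within the component stays in S
  have hwalk : ∀ {x y : ↥F} (_ : (G.induce F).Walk x y) (_ : (x : V) ∈ S)
      (hy : (y : V) ∈ S) (hx : (x : V) ∈ S),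
      (G.induce S).Reachable ⟨x, hx⟩ ⟨y, hy⟩ := by
    intro x y p
    induction p with
    | nil => intro _ hy hx; exact Reachable.refl _
    | @cons a b c h q ih =>
      intro _ hc hx
      have hbK : (G.induce F).connectedComponentMk b = K := by
        rw [← (hmem a).1 hx]
        exact (ConnectedComponent.sound h.reachable).symm
      have hb : (b : V) ∈ S := (hmem b).2 hbK
      have hadj : (G.induce S).Adj ⟨(a : V), hx⟩ ⟨(b : V), hb⟩ := by
        simpa using h
      exact hadj.reachable.trans (ih hb hc hb)
  have hconn : (G.induce S).Preconnected := by
    intro a b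
    have ha := a.2
    have hb := b.2
    obtain ⟨a', ha', hva⟩ := ha
    obtain ⟨b', hb', hvb⟩ := hb
    have hr : (G.induce F).Reachable a' b' := by
      rw [ConnectedComponent.mem_supp_iff] at ha' hb'
      exact ConnectedComponent.exact (ha'.trans hb'.symm)
    obtain ⟨p⟩ := hr
    have haS : (a' : V) ∈ S := ⟨a', ha', rfl⟩
    have hbS : (b' : V) ∈ S := ⟨b', hb', rfl⟩
    have := hwalk p haS hbS haS
    have ea : (⟨(a' : V), haS⟩ : ↥S) = a := Subtype.ext hva
    have eb : (⟨(b' : V), hbS⟩ : ↥S) = b := Subtype.ext hvb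
    rwa [ea, eb] at this
  constructor
  · exact ⟨v, ⟨⟨v, hv⟩, by rw [ConnectedComponent.mem_supp_iff], rfl⟩⟩
  · intro w hw C'
    by_cases hwF : w ∈ F
    · -- w ∈ F but not in S: no neighbors in S at all
      have : G.neighborSet w ∩ (Subtype.val '' C'.supp) = ∅ := by
        ext x
        simp only [Set.mem_inter_iff, Set.mem_empty_iff_false, iff_false, not_and]
        rintro hxn ⟨x', _, rfl⟩
        have hxS : (x' : V) ∈ S := x'.2
        have hxF : (x' : V) ∈ F := hSF hxS
        have hadj : (G.induce F).Adj ⟨w, hwF⟩ ⟨(x' : V), hxF⟩ := by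
          simpa using hxn
        have : w ∈ S := by
          refine (hmem ⟨w, hwF⟩).2 ?_
          rw [← (hmem ⟨(x' : V), hxF⟩).1 hxS]
          exact ConnectedComponent.sound hadj.reachable
        exact hw this
      rw [this]
      simp
    · -- w ∉ F: use the fort property for the component K
      have hsupp : C'.supp = Set.univ := by
        obtain ⟨x0, hx0⟩ := C'.exists_rep
        ext y
        simp only [ConnectedComponent.mem_supp_iff, Set.mem_univ, iff_true]
        rw [← hx0]
        exact ConnectedComponent.sound (hconn y x0)
      have himg : Subtype.val '' C'.supp = S := by
        rw [hsupp, Set.image_univ, Subtype.range_coe]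
      rw [himg]
      exact hf w hwF K
end
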